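/- arXiv:1902.02473 — 10 statements merged into one kernel-verified Lean document; each statement's English description precedes it below -/
import Mathlib

section
/- Let n be a non-negative integer, let 0 ≤ α < 1, and let β be a positive real number with β ≥ e·(1−α) when n = 0 and β ≥ e^(n−1)·(1−α) when n ≥ 1. If p ∈ H₁, p(z) ≠ 0 for all z ∈ 𝔻 (needed when n ≥ 1), and the function z ↦ 1 + β·z·p′(z)/p(z)^n is subordinate to z ↦ 1 + (1−α)z on 𝔻, then p is subordinate to z ↦ e^z on 𝔻. -/
/-!
The subordination gives `z · p'(z)/pⁿ(z) = ((1 - α)/β) · w(z)` for a Schwarz function `w`, so the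
Schwarz lemma bounds `|p'/pⁿ|` by `c = (1 - α)/β ≤ e^{-|n-1|}`. Integrating the derivative
`(1 - n) p'/pⁿ` of `q = p^{1-n}` along radii gives `|q| ≥ 1 - |n - 1| c ≥ c`, and since
`(p'/p) · q = p'/pⁿ` this forces `|p'/p| ≤ 1`. Hence the branch `g` of `log p` with `g(0) = 0` is a
Schwarz function, and `p = exp ∘ g`.
-/

open Complex

noncomputable section

/-- The open unit disk in the complex plane. -/
def unitDisk : Set ℂ := Metric.ball 0 1

/-- `f` is subordinate to `g` on the open unit disk: there is an analytic
Schwarz function `w` with `w 0 = 0`, `‖w z‖ < 1` on the disk, and `f = g ∘ w`. -/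
def Subord (f g : ℂ → ℂ) : Prop :=
  ∃ w : ℂ → ℂ, DifferentiableOn ℂ w unitDisk ∧ w 0 = 0 ∧
    (∀ z ∈ unitDisk, ‖w z‖ < 1) ∧ ∀ z ∈ unitDisk, f z = g (w z)

open Metric

theorem norm_sub_le_of_norm_hasDerivAt_le_ball {f f' : ℂ → ℂ} {c : ℂ} {r C : ℝ}
    (hf : ∀ z ∈ ball c r, HasDerivAt f (f' z) z) (hC : ∀ z ∈ ball c r, ‖f' z‖ ≤ C)
    {z : ℂ} (hz : z ∈ ball c r) : ‖f z - f c‖ ≤ C * ‖z - c‖ :=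
  (convex_ball c r).norm_image_sub_le_of_norm_hasDerivWithin_le
    (fun x hx => (hf x hx).hasDerivWithinAt) hC (mem_ball_self (pos_of_mem_ball hz)) hz

theorem exists_hasDerivAt_logDeriv_and_exp_eq {p : ℂ → ℂ} {c : ℂ} {r : ℝ}
    (hp : DifferentiableOn ℂ p (ball c r)) (hpne : ∀ z ∈ ball c r, p z ≠ 0) :
    ∃ g : ℂ → ℂ, g c = 0 ∧ (∀ z ∈ ball c r, HasDerivAt g (deriv p z / p z) z) ∧
      ∀ z ∈ ball c r, p c * exp (g z) = p z := by
  obtain ⟨g, hg0, hg⟩ :=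
    ((hp.deriv isOpen_ball).div hp hpne).isExactOn_ball.with_val_at c 0
  refine ⟨g, hg0, hg, fun z hz => ?_⟩
  have hpz (z) (hz : z ∈ ball c r) : HasDerivAt p (deriv p z) z :=
    (hp.differentiableAt (isOpen_ball.mem_nhds hz)).hasDerivAt
  have hconst : ∀ x ∈ ball c r, HasDerivAt (fun z => p z * exp (-g z)) 0 x := by
    intro x hx
    have hgx : HasDerivAt g (deriv p x / p x) x := hg x hx
    refine ((hpz x hx).mul hgx.neg.cexp).congr_deriv ?_
    field_simp [hpne x hx]
    ring
  have h := norm_sub_le_of_norm_hasDerivAt_le_ball hconst (fun _ _ => norm_zero.le) hz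
  rw [zero_mul, norm_le_zero_iff, sub_eq_zero, hg0, neg_zero, exp_zero, mul_one] at h
  rw [← h, mul_assoc, ← exp_add, neg_add_cancel, exp_zero, mul_one]

theorem subord_exp_of_norm_logDeriv_le_one {p : ℂ → ℂ} (hp : DifferentiableOn ℂ p unitDisk)
    (hp0 : p 0 = 1) (hpne : ∀ z ∈ unitDisk, p z ≠ 0)
    (hlog : ∀ z ∈ unitDisk, ‖deriv p z / p z‖ ≤ 1) : Subord p exp := by
  obtain ⟨g, hg0, hg, hexp⟩ := exists_hasDerivAt_logDeriv_and_exp_eq hp hpne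
  refine ⟨g, fun z hz => (hg z hz).differentiableAt.differentiableWithinAt, hg0,
    fun z hz => ?_, fun z hz => by rw [← hexp z hz, hp0, one_mul]⟩
  calc ‖g z‖ = ‖g z - g 0‖ := by rw [hg0, sub_zero]
    _ ≤ 1 * ‖z - 0‖ := norm_sub_le_of_norm_hasDerivAt_le_ball hg hlog hz
    _ < 1 := by rwa [one_mul, sub_zero, ← mem_ball_zero_iff]

theorem norm_le_of_mul_eq_mul_schwarz {φ w : ℂ → ℂ} {c : ℂ} (hφ : ContinuousOn φ unitDisk)
    (hwd : DifferentiableOn ℂ w unitDisk) (hw0 : w 0 = 0) (hw1 : ∀ z ∈ unitDisk, ‖w z‖ < 1)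
    (h : ∀ z ∈ unitDisk, z * φ z = c * w z) : ∀ z ∈ unitDisk, ‖φ z‖ ≤ ‖c‖ := by
  have hpunct : ∀ z ∈ unitDisk, z ≠ 0 → ‖φ z‖ ≤ ‖c‖ := by
    intro z hz hz0
    have hschwarz : ‖w z‖ ≤ ‖z‖ := norm_le_norm_of_mapsTo_ball hwd
      (fun x hx => mem_closedBall_zero_iff.2 (hw1 x hx).le) hw0 (mem_ball_zero_iff.1 hz)
    have hnorm : ‖z‖ * ‖φ z‖ = ‖c‖ * ‖w z‖ := by rw [← norm_mul, ← norm_mul, h z hz]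
    have hzpos : 0 < ‖z‖ := norm_pos_iff.2 hz0
    nlinarith [mul_le_mul_of_nonneg_left hschwarz (norm_nonneg c)]
  intro z hz
  rcases eq_or_ne z 0 with rfl | hz0
  · refine le_of_tendsto
      ((hφ.continuousAt (isOpen_ball.mem_nhds hz)).norm.continuousWithinAt (s := {0}ᶜ)) ?_
    filter_upwards [nhdsWithin_le_nhds (isOpen_ball.mem_nhds hz), self_mem_nhdsWithin]
      with x hx hx0 using hpunct x hx hx0
  · exact hpunct z hz hz0

theorem norm_logDeriv_le_one_of_norm_deriv_div_pow_le (n : ℕ) {p : ℂ → ℂ} {c : ℝ}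
    (hp : DifferentiableOn ℂ p unitDisk) (hp0 : p 0 = 1) (hpne : ∀ z ∈ unitDisk, p z ≠ 0)
    (hc : (1 + |(n : ℝ) - 1|) * c ≤ 1) (hφ : ∀ z ∈ unitDisk, ‖deriv p z / p z ^ n‖ ≤ c) :
    ∀ z ∈ unitDisk, ‖deriv p z / p z‖ ≤ 1 := by
  have hc0 : 0 ≤ c := (norm_nonneg _).trans (hφ 0 (mem_ball_self one_pos))
  set k : ℤ := 1 - n
  have hk : ‖(k : ℂ)‖ = |(n : ℝ) - 1| := by
    rw [norm_intCast, abs_sub_comm]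
    push_cast [k]
    rfl
  have hq : ∀ z ∈ unitDisk, HasDerivAt (fun z => p z ^ k) (k * (deriv p z / p z ^ n)) z := by
    intro z hz
    have hpz : HasDerivAt p (deriv p z) z :=
      (hp.differentiableAt (isOpen_ball.mem_nhds hz)).hasDerivAt
    refine ((hasDerivAt_zpow k (p z) (Or.inl (hpne z hz))).comp z hpz).congr_deriv ?_
    rw [show k - 1 = -(n : ℤ) by ring, zpow_neg, zpow_natCast]
    ring
  have hq_bound : ∀ z ∈ unitDisk, ‖(k : ℂ) * (deriv p z / p z ^ n)‖ ≤ |(n : ℝ) - 1| * c :=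
    fun z hz => by
      rw [norm_mul, hk]
      exact mul_le_mul_of_nonneg_left (hφ z hz) (abs_nonneg _)
  intro z hz
  have hqz : c ≤ ‖p z ^ k‖ := by
    have hdist := norm_sub_le_of_norm_hasDerivAt_le_ball hq hq_bound hz
    rw [hp0, one_zpow, sub_zero] at hdist
    have hshrink : |(n : ℝ) - 1| * c * ‖z‖ ≤ |(n : ℝ) - 1| * c :=
      mul_le_of_le_one_right (by positivity) (mem_ball_zero_iff.1 hz).le
    have hrev := norm_sub_norm_le (1 : ℂ) (p z ^ k)
    rw [norm_one, norm_sub_rev] at hrev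
    linarith
  have hprod : deriv p z / p z * p z ^ k = deriv p z / p z ^ n := by
    rw [zpow_sub₀ (hpne z hz), zpow_one, zpow_natCast]
    field_simp [hpne z hz]
  have hqpos : 0 < ‖p z ^ k‖ := norm_pos_iff.2 (zpow_ne_zero k (hpne z hz))
  refine le_of_mul_le_mul_right ?_ hqpos
  rw [one_mul, ← norm_mul, hprod]
  exact (hφ z hz).trans hqz

theorem stmt_0_general (n : ℕ) (α β : ℝ) (hα1 : α < 1) (hβpos : 0 < β)
    (hβ0 : n = 0 → Real.exp 1 * (1 - α) ≤ β)
    (hβ1 : 1 ≤ n → Real.exp ((n : ℝ) - 1) * (1 - α) ≤ β)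
    (p : ℂ → ℂ) (hp : DifferentiableOn ℂ p unitDisk) (hp0 : p 0 = 1)
    (hpne : ∀ z ∈ unitDisk, p z ≠ 0)
    (hsub : Subord (fun z => 1 + (β : ℂ) * z * deriv p z / (p z) ^ n)
      (fun z => 1 + ((1 : ℂ) - (α : ℂ)) * z)) :
    Subord p Complex.exp := by
  obtain ⟨w, hwd, hw0, hw1, hw⟩ := hsub
  have hβ : Real.exp |(n : ℝ) - 1| * (1 - α) ≤ β := by
    rcases Nat.eq_zero_or_pos n with rfl | hn
    · simpa using hβ0 rfl
    · rw [abs_of_nonneg (sub_nonneg.2 (by exact_mod_cast hn))]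
      exact hβ1 hn
  have hcont : ContinuousOn (fun z => deriv p z / p z ^ n) unitDisk :=
    (hp.deriv isOpen_ball).continuousOn.div (hp.continuousOn.pow n)
      fun z hz => pow_ne_zero n (hpne z hz)
  have hφ := norm_le_of_mul_eq_mul_schwarz (c := (1 - α) / β) hcont hwd hw0 hw1 fun z hz => by
    have h := hw z hz
    field_simp [hβpos.ne', pow_ne_zero n (hpne z hz)] at h ⊢
    linear_combination h
  have hc : ‖((1 - α) / β : ℂ)‖ = (1 - α) / β := by
    rw [← ofReal_one, ← ofReal_sub, ← ofReal_div, norm_real, Real.norm_of_nonneg]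
    exact div_nonneg (by linarith) hβpos.le
  refine subord_exp_of_norm_logDeriv_le_one hp hp0 hpne
    (norm_logDeriv_le_one_of_norm_deriv_div_pow_le n hp hp0 hpne ?_ hφ)
  rw [hc, ← mul_div_assoc, div_le_one hβpos]
  calc (1 + |(n : ℝ) - 1|) * (1 - α) ≤ Real.exp |(n : ℝ) - 1| * (1 - α) := by
        gcongr
        linarith [Real.add_one_le_exp |(n : ℝ) - 1|]
    _ ≤ β := hβ

theorem stmt_0 (n : ℕ) (α β : ℝ) (hα0 : 0 ≤ α) (hα1 : α < 1) (hβpos : 0 < β)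
    (hβ0 : n = 0 → Real.exp 1 * (1 - α) ≤ β)
    (hβ1 : 1 ≤ n → Real.exp ((n : ℝ) - 1) * (1 - α) ≤ β)
    (p : ℂ → ℂ) (hp : DifferentiableOn ℂ p unitDisk) (hp0 : p 0 = 1)
    (hpne : ∀ z ∈ unitDisk, p z ≠ 0)
    (hsub : Subord (fun z => 1 + (β : ℂ) * z * deriv p z / (p z) ^ n)
      (fun z => 1 + ((1 : ℂ) - (α : ℂ)) * z)) :
    Subord p Complex.exp :=
  stmt_0_general n α β hα1 hβpos hβ0 hβ1 p hp hp0 hpne hsub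
end
end

section
/- Let n be a non-negative integer and let β be a real number with β ≥ 2·e^n. If p ∈ H₁, p(z) ≠ 0 for all z ∈ 𝔻, and the function z ↦ 1 + β·z·p′(z)/p(z)^(n+1) is subordinate to z ↦ (2+z)/(2−z) on 𝔻, then p is subordinate to z ↦ e^z on 𝔻. -/
open Complex

noncomputable section

/-
Writing `ψ = p' / p ^ (n + 1)`, subordination gives `β z ψ(z) = 2w/(2 - w)` with `|w| < 1`, so
`|z ψ(z)| < 2/β ≤ e^(-n)`, and the Schwarz lemma upgrades this to `|p'| ≤ e^(-n) |p|^(n+1)`.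
Let `q` be the holomorphic logarithm of `p` with `q 0 = 0`. Wherever `|q| ≤ 1` we have `|p| ≤ e`,
hence `|q'| = |p'/p| ≤ e^(-n) |p|^n ≤ 1`; a barrier argument along the ray `[0, z]` then gives
`|q z| ≤ |z| < 1`, so `q` is a Schwarz function with `p = exp ∘ q`.
-/

open Metric Set

theorem norm_two_add_div_two_sub_sub_one_lt_two {w : ℂ} (hw : ‖w‖ < 1) :
    ‖(2 + w) / (2 - w) - 1‖ < 2 := by
  have h2w : 2 - ‖w‖ ≤ ‖2 - w‖ := by simpa using norm_sub_norm_le (2 : ℂ) w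
  have hpos : 0 < ‖2 - w‖ := by linarith
  have hne : (2 : ℂ) - w ≠ 0 := norm_pos_iff.1 hpos
  rw [div_sub_one hne, norm_div, div_lt_iff₀ hpos, show (2 : ℂ) + w - (2 - w) = 2 * w by ring,
    norm_mul, Complex.norm_two]
  linarith

namespace Complex

theorem norm_le_div_of_mapsTo_ball_mul {ψ : ℂ → ℂ} {R M : ℝ} {z : ℂ}
    (hd : DifferentiableOn ℂ ψ (ball 0 R))
    (h_maps : MapsTo (fun u => u * ψ u) (ball 0 R) (closedBall 0 M)) (hz : z ∈ ball 0 R) :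
    ‖ψ z‖ ≤ M / R := by
  have hR : 0 < R := nonempty_ball.1 ⟨z, hz⟩
  have hdslope : dslope (fun u => u * ψ u) 0 z = ψ z := by
    rcases eq_or_ne z 0 with rfl | hz0
    · have hψ := (hd.differentiableAt (ball_mem_nhds 0 hR)).hasDerivAt
      rw [dslope_same, ((hasDerivAt_id' (0 : ℂ)).fun_mul hψ).deriv]
      simp
    · simpa using dslope_sub_smul_of_ne ψ hz0
  rw [← hdslope]
  exact norm_dslope_le_div_of_mapsTo_ball (differentiableOn_id.mul hd)
    (by simpa using h_maps) hz

theorem exists_hasDerivAt_exp_eq_of_ne_zero {p : ℂ → ℂ} {c ζ : ℂ} {r : ℝ}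
    (hp : DifferentiableOn ℂ p (ball c r)) (hpne : ∀ z ∈ ball c r, p z ≠ 0)
    (hζ : exp ζ = p c) :
    ∃ q : ℂ → ℂ, q c = ζ ∧
      ∀ z ∈ ball c r, HasDerivAt q (deriv p z / p z) z ∧ exp (q z) = p z := by
  have hp' : DifferentiableOn ℂ (deriv p) (ball c r) := hp.deriv isOpen_ball
  obtain ⟨q, hqc, hq⟩ := ((hp'.div hp hpne).isExactOn_ball).with_val_at c ζ
  have hderiv : ∀ z ∈ ball c r, HasDerivAt (fun u => exp (-q u) * p u) 0 z := by
    intro z hz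
    have hpz := (hp.differentiableAt (isOpen_ball.mem_nhds hz)).hasDerivAt
    have h := ((hq z hz).fun_neg.cexp).fun_mul hpz
    rwa [Pi.div_apply, mul_neg, neg_mul, mul_assoc, div_mul_cancel₀ _ (hpne z hz),
      neg_add_cancel] at h
  have hconst : ∀ z ∈ ball c r, exp (-q z) * p z = 1 := by
    intro z hz
    have hc : c ∈ ball c r := mem_ball_self (pos_of_mem_ball hz)
    rw [isOpen_ball.is_const_of_deriv_eq_zero (convex_ball c r).isPreconnected
      (fun u hu => (hderiv u hu).differentiableAt.differentiableWithinAt)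
      (fun u hu => (hderiv u hu).deriv) hz hc, hqc, ← hζ, ← exp_add, neg_add_cancel, exp_zero]
  refine ⟨q, hqc, fun z hz => ⟨hq z hz, ?_⟩⟩
  rw [← mul_one (exp (q z)), ← hconst z hz, ← mul_assoc, ← exp_add, add_neg_cancel, exp_zero,
    one_mul]

theorem norm_le_norm_of_norm_deriv_le_one {q q' : ℂ → ℂ} {z : ℂ}
    (hq : ∀ u ∈ ball (0 : ℂ) 1, HasDerivAt q (q' u) u) (hq0 : q 0 = 0)
    (hq' : ∀ u ∈ ball (0 : ℂ) 1, ‖q u‖ ≤ 1 → ‖q' u‖ ≤ 1) (hz : z ∈ ball (0 : ℂ) 1) :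
    ‖q z‖ ≤ ‖z‖ := by
  have hz1 : ‖z‖ < 1 := mem_ball_zero_iff.1 hz
  have hseg : ∀ s ∈ Icc (0 : ℝ) 1, (s : ℂ) * z ∈ ball (0 : ℂ) 1 := fun s hs => by
    rw [mem_ball_zero_iff, norm_mul, norm_real, Real.norm_of_nonneg hs.1]
    nlinarith [norm_nonneg z, hs.2]
  have hray : ∀ s ∈ Icc (0 : ℝ) 1,
      HasDerivAt (fun s : ℝ => q (s * z)) (z * q' (s * z)) s := fun s hs =>
    (((hq _ (hseg s hs)).comp (s : ℂ) (hasDerivAt_mul_const z)).comp_ofReal).congr_deriv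
      (mul_comm _ _)
  suffices h : ∀ ρ, ‖z‖ < ρ → ρ < 1 → ‖q z‖ ≤ ρ by
    refine le_of_forall_gt_imp_ge_of_dense fun c hc => ?_
    have hmid : ‖z‖ < (‖z‖ + 1) / 2 ∧ (‖z‖ + 1) / 2 < 1 := by constructor <;> linarith
    exact (h _ (lt_min hc hmid.1) (min_lt_of_right_lt hmid.2)).trans (min_le_left _ _)
  intro ρ hzρ hρ1
  have hB : ∀ s : ℝ, HasDerivAt (fun s => ρ * s) ρ s := fun s => by
    simpa using (hasDerivAt_id s).const_mul ρ
  -- `ρ s` is a barrier for `‖q (s z)‖`: where they meet, `‖q‖ ≤ 1`, so the slope is `≤ ‖z‖ < ρ`.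
  have key := image_norm_le_of_norm_deriv_right_lt_deriv_boundary
    (fun s hs => (hray s hs).continuousAt.continuousWithinAt)
    (fun s hs => (hray s (Ico_subset_Icc_self hs)).hasDerivWithinAt)
    (by simp [hq0]) hB (fun s hs hqs => ?_) (right_mem_Icc.2 zero_le_one)
  · simpa using key
  · have hs1 : ‖q (s * z)‖ ≤ 1 := by
      rw [hqs]; nlinarith [hs.1, hs.2]
    calc ‖z * q' (s * z)‖ = ‖z‖ * ‖q' (s * z)‖ := norm_mul _ _
      _ ≤ ‖z‖ * 1 := by gcongr; exact hq' _ (hseg s (Ico_subset_Icc_self hs)) hs1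
      _ < ρ := by linarith

end Complex

theorem mapsTo_ball_of_subord {φ : ℂ → ℂ} {β : ℝ} (hβ : 0 < β)
    (h : Subord (fun z => 1 + β * φ z) (fun z => (2 + z) / (2 - z))) :
    MapsTo φ unitDisk (ball 0 (2 / β)) := by
  obtain ⟨w, -, -, hw, hφw⟩ := h
  intro z hz
  have hβφ : (β : ℂ) * φ z = (2 + w z) / (2 - w z) - 1 := by
    have hz' : 1 + (β : ℂ) * φ z = (2 + w z) / (2 - w z) := hφw z hz
    rw [← hz']
    ring
  have hlt := norm_two_add_div_two_sub_sub_one_lt_two (hw z hz)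
  rw [← hβφ, norm_mul, norm_real, Real.norm_of_nonneg hβ.le] at hlt
  rw [mem_ball_zero_iff, lt_div_iff₀ hβ]
  linarith

theorem subord_exp_of_norm_deriv_le (n : ℕ) {p : ℂ → ℂ} (hp : DifferentiableOn ℂ p unitDisk)
    (hp0 : p 0 = 1) (hpne : ∀ z ∈ unitDisk, p z ≠ 0)
    (hp' : ∀ z ∈ unitDisk, ‖deriv p z‖ ≤ Real.exp (-n) * ‖p z‖ ^ (n + 1)) :
    Subord p exp := by
  obtain ⟨q, hq0, hq⟩ :=
    exists_hasDerivAt_exp_eq_of_ne_zero hp hpne (ζ := 0) (by rw [exp_zero, hp0])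
  have hq' : ∀ u ∈ unitDisk, ‖q u‖ ≤ 1 → ‖deriv p u / p u‖ ≤ 1 := by
    intro u hu hqu
    have hpu : 0 < ‖p u‖ := norm_pos_iff.2 (hpne u hu)
    have hpu_le : ‖p u‖ ^ n ≤ Real.exp n := by
      rw [← (hq u hu).2, norm_exp, ← Real.exp_one_pow]
      gcongr
      exact (re_le_norm _).trans hqu
    calc ‖deriv p u / p u‖ = ‖deriv p u‖ / ‖p u‖ := norm_div _ _
      _ ≤ Real.exp (-n) * ‖p u‖ ^ (n + 1) / ‖p u‖ := by gcongr; exact hp' u hu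
      _ = Real.exp (-n) * ‖p u‖ ^ n := by field_simp; ring
      _ ≤ Real.exp (-n) * Real.exp n := by gcongr
      _ = 1 := by rw [← Real.exp_add, neg_add_cancel, Real.exp_zero]
  refine ⟨q, fun z hz => (hq z hz).1.differentiableAt.differentiableWithinAt, hq0,
    fun z hz => ?_, fun z hz => (hq z hz).2.symm⟩
  exact (norm_le_norm_of_norm_deriv_le_one (fun u hu => (hq u hu).1) hq0 hq' hz).trans_lt
    (mem_ball_zero_iff.1 hz)

theorem stmt_1 (n : ℕ) (β : ℝ) (hβ : 2 * Real.exp (n : ℝ) ≤ β)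
    (p : ℂ → ℂ) (hp : DifferentiableOn ℂ p unitDisk) (hp0 : p 0 = 1)
    (hpne : ∀ z ∈ unitDisk, p z ≠ 0)
    (hsub : Subord (fun z => 1 + (β : ℂ) * z * deriv p z / (p z) ^ (n + 1))
      (fun z => (2 + z) / (2 - z))) :
    Subord p Complex.exp := by
  set ψ : ℂ → ℂ := fun z => deriv p z / p z ^ (n + 1)
  have hψ : DifferentiableOn ℂ ψ unitDisk :=
    (hp.deriv isOpen_ball).div (hp.pow _) fun z hz => pow_ne_zero _ (hpne z hz)
  have hβ0 : 0 < β := lt_of_lt_of_le (by positivity) hβ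
  have hβn : 2 / β ≤ Real.exp (-n) := by
    rw [div_le_iff₀ hβ0, Real.exp_neg]
    rwa [le_inv_mul_iff₀ (Real.exp_pos _), mul_comm]
  have hmaps : MapsTo (fun z => z * ψ z) unitDisk (closedBall 0 (Real.exp (-n))) := by
    refine (mapsTo_ball_of_subord hβ0 ?_).mono_right (ball_subset_closedBall.trans
      (closedBall_subset_closedBall hβn))
    convert hsub using 3 with z
    ring
  refine subord_exp_of_norm_deriv_le n hp hp0 hpne fun z hz => ?_
  have hψz := Complex.norm_le_div_of_mapsTo_ball_mul hψ hmaps hz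
  rwa [div_one, norm_div, norm_pow, div_le_iff₀ (pow_pos (norm_pos_iff.2 (hpne z hz)) _)] at hψz
end
end

section
/- Let α and β be positive real numbers satisfying α(e−1) + βe ≥ e, and let p ∈ H₁. If the function z ↦ (1−α)·p(z) + α·p(z)² + β·z·p′(z) is subordinate to z ↦ 1 + z on 𝔻, then p is subordinate to z ↦ e^z on 𝔻. -/
open Complex

noncomputable section

/-!
Let `Ω = exp '' 𝔻`. If `p` leaves `Ω`, take a point `z₀` of least modulus with `p z₀ ∉ Ω`.
On `‖z‖ ≤ ‖z₀‖` the function `q = log ∘ p` is analytic with `‖q‖ ≤ 1`, `q 0 = 0` and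
`‖q z₀‖ = 1`, so Jack's lemma gives `z₀ q'(z₀) = m q(z₀)` with `m ≥ 1`. Writing `c = q z₀`, the
value of `(1 - α) p + α p² + β z p'` at `z₀` is `ψ = (1 - α) eᶜ + α e²ᶜ + β m c eᶜ`. For
`c = x + iy` on the unit circle, the real part of `(ψ - 1) · conj (c e^{iy})` is at least `1`: it
splits into two terms controlled by elementary inequalities in `x` and `y`, which the hypothesis
`α (e - 1) + β e ≥ e` combines. Hence `‖ψ - 1‖ ≥ 1`, contradicting the subordination to `1 + z`;
so `p(𝔻) ⊆ Ω` and `log ∘ p` is the required Schwarz function.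
-/

open ComplexConjugate Metric Set

namespace Real

lemma sq_sub_le_mul_sin_of_abs_le_one {y : ℝ} (hy : |y| ≤ 1) :
    y ^ 2 - 7 / 32 * y ^ 4 ≤ y * sin y := by
  have h := abs_le.1 (sin_bound hy)
  have hy4 : |y| ^ 4 * |y| ≤ y ^ 4 := by
    have := pow_le_pow_left₀ (abs_nonneg y) hy 1
    nlinarith [pow_nonneg (abs_nonneg y) 4, sq_abs y, pow_two_nonneg y]
  rcases le_total 0 y with h0 | h0
  · rw [abs_of_nonneg h0] at h hy4; nlinarith [mul_le_mul_of_nonneg_left h.1 h0]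
  · rw [abs_of_nonpos h0] at h hy4; nlinarith [mul_le_mul_of_nonpos_left h.2 h0]

lemma cos_le_one_sub_sq_div_two_add_of_abs_le_one {y : ℝ} (hy : |y| ≤ 1) :
    cos y ≤ 1 - y ^ 2 / 2 + 5 / 96 * y ^ 4 := by
  have h := (abs_le.1 (cos_bound hy)).2
  rw [show |y| ^ 4 = y ^ 4 by rw [pow_abs, abs_of_nonneg (by positivity)]] at h
  linarith

lemma exp_le_cubic_of_nonneg_of_le_one {u : ℝ} (h0 : 0 ≤ u) (h1 : u ≤ 1) :
    exp u ≤ 1 + u + u ^ 2 / 2 + 2 / 9 * u ^ 3 := by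
  have h := (abs_le.1 (exp_bound (x := u) (by rwa [abs_of_nonneg h0]) (n := 3) (by norm_num))).2
  norm_num [Finset.sum_range_succ, Nat.factorial, abs_of_nonneg h0] at h
  linarith

lemma one_le_one_add_mul_exp_sub_mul_cos_add_mul_sin {x y : ℝ} (hxy : x ^ 2 + y ^ 2 = 1) :
    1 ≤ (1 + x) * exp x - x * cos y + y * sin y := by
  have hy : |y| ≤ 1 := (sq_le_one_iff_abs_le_one _).1 (by nlinarith)
  have hx : |x| ≤ 1 := (sq_le_one_iff_abs_le_one _).1 (by nlinarith)
  have hsin := sq_sub_le_mul_sin_of_abs_le_one hy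
  have hx1 : 0 ≤ 1 + x := by linarith [neg_abs_le x]
  rcases le_total 0 x with h0 | h0
  · nlinarith [one_le_exp h0, cos_le_one y, mul_le_mul_of_nonneg_left (cos_le_one y) h0]
  · have hexp := mul_le_mul_of_nonneg_left (add_one_le_exp x) hx1
    have hcos := mul_le_mul_of_nonpos_left (one_sub_sq_div_two_le_cos (x := y)) h0
    have hy2 : y ^ 2 = 1 - x ^ 2 := by linarith
    have hy4 : y ^ 4 = (1 - x ^ 2) ^ 2 := by rw [← hy2]; ring
    simp only [hy2, hy4] at hsin hcos
    nlinarith [mul_nonneg hx1 hx1, mul_nonneg (mul_nonneg hx1 hx1) (neg_nonneg.2 h0)]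

lemma exp_one_mul_one_add_sub_one_le_of_nonneg {x y : ℝ} (hxy : x ^ 2 + y ^ 2 = 1)
    (hx : 0 ≤ x) :
    exp 1 * (1 + x) - 1 ≤ exp (1 + x) * (x * cos y + y * sin y) := by
  have hy : |y| ≤ 1 := (sq_le_one_iff_abs_le_one _).1 (by nlinarith)
  have hx1 : x ≤ 1 := by nlinarith
  have hy2 : y ^ 2 = 1 - x ^ 2 := by linarith
  have hsin := sq_sub_le_mul_sin_of_abs_le_one hy
  have hcos := mul_le_mul_of_nonneg_left (one_sub_sq_div_two_le_cos (x := y)) hx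
  simp only [show y ^ 4 = (y ^ 2) ^ 2 by ring, hy2] at hsin hcos
  -- `0.633 > 1 - 1 / e` is all the numerical information on `e` this case needs.
  obtain ⟨b, hb, hbg⟩ : ∃ b, x + 0.633 ≤ (1 + x) * b ∧ b ≤ x * cos y + y * sin y := by
    refine ⟨_, ?_, add_le_add hcos hsin⟩
    nlinarith [mul_nonneg hx hx, mul_nonneg (mul_nonneg hx hx) hx,
      mul_nonneg hx (sub_nonneg.2 hx1), mul_nonneg (mul_nonneg hx hx) (sub_nonneg.2 hx1),
      mul_nonneg (mul_nonneg (mul_nonneg hx hx) hx) (sub_nonneg.2 hx1)]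
  have hexp : exp 1 * (1 + x) ≤ exp (1 + x) := by
    rw [exp_add]
    exact mul_le_mul_of_nonneg_left (by linarith [add_one_le_exp x]) (exp_pos 1).le
  calc exp 1 * (1 + x) - 1 ≤ exp 1 * (1 + x) * b := by nlinarith [exp_one_lt_d9, exp_pos 1]
    _ ≤ exp (1 + x) * b := mul_le_mul_of_nonneg_right hexp (by nlinarith)
    _ ≤ exp (1 + x) * (x * cos y + y * sin y) := mul_le_mul_of_nonneg_left hbg (exp_pos _).le

lemma exp_one_mul_one_add_sub_one_le_of_nonpos {x y : ℝ} (hxy : x ^ 2 + y ^ 2 = 1)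
    (hx : x ≤ 0) :
    exp 1 * (1 + x) - 1 ≤ exp (1 + x) * (x * cos y + y * sin y) := by
  have hy : |y| ≤ 1 := (sq_le_one_iff_abs_le_one _).1 (by nlinarith)
  have hy2 : y ^ 2 = 1 - x ^ 2 := by linarith
  have hsin := sq_sub_le_mul_sin_of_abs_le_one hy
  have hcos := mul_le_mul_of_nonpos_left (cos_le_one_sub_sq_div_two_add_of_abs_le_one hy) hx
  simp only [show y ^ 4 = (y ^ 2) ^ 2 by ring, hy2] at hsin hcos
  obtain ⟨t, rfl⟩ : ∃ t, x = t - 1 := ⟨x + 1, by ring⟩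
  rw [add_sub_cancel]
  have ht0 : 0 ≤ t := by nlinarith
  have ht1 : t ≤ 1 := by linarith
  have hE := exp_one_lt_d9
  obtain ⟨b, hlow, hupp, hbg⟩ : ∃ b, exp 1 * t - 1 ≤ (1 + t + t ^ 2 / 2) * b ∧
      exp 1 * t - 1 ≤ (1 + t + t ^ 2 / 2 + 2 / 9 * t ^ 3) * b ∧
      b ≤ (t - 1) * cos y + y * sin y := by
    refine ⟨_, ?_, ?_, add_le_add hcos hsin⟩
    · nlinarith [mul_nonneg ht0 ht0, mul_nonneg (mul_nonneg ht0 ht0) ht0,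
        mul_nonneg ht0 (sub_nonneg.2 ht1), mul_nonneg (mul_nonneg ht0 ht0) (sub_nonneg.2 ht1)]
    · nlinarith [mul_nonneg ht0 ht0, mul_nonneg (mul_nonneg ht0 ht0) ht0,
        mul_nonneg ht0 (sub_nonneg.2 ht1), mul_nonneg (mul_nonneg ht0 ht0) (sub_nonneg.2 ht1),
        mul_nonneg (mul_nonneg (mul_nonneg ht0 ht0) ht0) (sub_nonneg.2 ht1)]
  -- `exp t` lies between its quadratic and cubic Taylor bounds, so `exp t * b` lies between
  -- their products with `b`, both of which dominate `e t - 1`.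
  have hexpb : exp 1 * t - 1 ≤ exp t * b := by
    rcases le_total 0 b with hb | hb
    · exact hlow.trans (mul_le_mul_of_nonneg_right (quadratic_le_exp_of_nonneg ht0) hb)
    · exact hupp.trans (mul_le_mul_of_nonpos_right (exp_le_cubic_of_nonneg_of_le_one ht0 ht1) hb)
  exact hexpb.trans (mul_le_mul_of_nonneg_left hbg (exp_pos _).le)

lemma exp_one_mul_one_add_sub_one_le {x y : ℝ} (hxy : x ^ 2 + y ^ 2 = 1) :
    exp 1 * (1 + x) - 1 ≤ exp (1 + x) * (x * cos y + y * sin y) :=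
  (le_total 0 x).elim (exp_one_mul_one_add_sub_one_le_of_nonneg hxy)
    (exp_one_mul_one_add_sub_one_le_of_nonpos hxy)

end Real

def psi (α β : ℝ) (u v : ℂ) : ℂ := (1 - α) * u + α * u ^ 2 + β * v

lemma one_le_norm_psi_exp_sub_one {α β m : ℝ} (hα : 0 ≤ α) (hβ : 0 ≤ β)
    (hcond : Real.exp 1 ≤ α * (Real.exp 1 - 1) + β * Real.exp 1) (hm : 1 ≤ m)
    {c : ℂ} (hc : ‖c‖ = 1) : 1 ≤ ‖psi α β (exp c) (m * c * exp c) - 1‖ := by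
  set x := c.re
  set y := c.im
  set u := exp (y * I)
  set ex := Real.exp x
  have hxy : x ^ 2 + y ^ 2 = 1 := by
    have h := Complex.sq_norm c
    rw [hc, normSq_apply] at h
    linear_combination -h
  have hcc : c * conj c = 1 := by rw [Complex.mul_conj, Complex.normSq_eq_norm_sq, hc]; simp
  have huu : u * conj u = 1 := by
    rw [Complex.mul_conj, Complex.normSq_eq_norm_sq, Complex.norm_exp_ofReal_mul_I]; simp
  have hexp : exp c = ex * u := by
    rw [Complex.ofReal_exp, ← Complex.exp_add, Complex.re_add_im]
  have hrot : (psi α β (exp c) (m * c * exp c) - 1) * (conj c * conj u)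
      = ex * conj c - conj (c * u) + α * (ex ^ 2 * (u * conj c) - ex * conj c) + β * m * ex := by
    rw [psi, hexp, map_mul]
    linear_combination
      (ex * conj c + α * ex ^ 2 * u * conj c - α * ex * conj c + β * m * ex) * huu
        + β * m * ex * u * conj u * hcc
  have hre : ((psi α β (exp c) (m * c * exp c) - 1) * (conj c * conj u)).re
      = ex * x - (x * Real.cos y - y * Real.sin y)
        + α * (ex ^ 2 * (x * Real.cos y + y * Real.sin y) - ex * x) + β * m * ex := by
    rw [hrot]
    simp only [u, add_re, sub_re, mul_re, mul_im, conj_re, conj_im, ofReal_re, ofReal_im, sq,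
      exp_ofReal_mul_I_re, exp_ofReal_mul_I_im]
    ring
  have hP := Real.one_le_one_add_mul_exp_sub_mul_cos_add_mul_sin hxy
  have hC := Real.exp_one_mul_one_add_sub_one_le hxy
  rw [Real.exp_add] at hC
  have hex : 0 < ex := Real.exp_pos x
  have he : 0 < Real.exp 1 := Real.exp_pos 1
  have hF : 1 ≤ ex * x - (x * Real.cos y - y * Real.sin y)
      + α * (ex ^ 2 * (x * Real.cos y + y * Real.sin y) - ex * x) + β * m * ex := by
    have h1 := mul_le_mul_of_nonneg_left hC (mul_nonneg hα hex.le)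
    have h2 := mul_le_mul_of_nonneg_left hcond hex.le
    have h3 := mul_le_mul_of_nonneg_left hm (mul_nonneg (mul_nonneg hβ hex.le) he.le)
    refine le_of_mul_le_mul_left ?_ he
    nlinarith
  have hnorm : ‖conj c * conj u‖ = 1 := by
    rw [norm_mul, Complex.norm_conj, Complex.norm_conj, hc, Complex.norm_exp_ofReal_mul_I, one_mul]
  calc 1 ≤ _ := hF
    _ = _ := hre.symm
    _ ≤ _ := re_le_norm _
    _ = _ := by rw [norm_mul, hnorm, mul_one]

lemma im_mul_deriv_mul_conj_eq_zero {q : ℂ → ℂ} {z₀ : ℂ} (hq : DifferentiableAt ℂ q z₀)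
    (hmax : ∀ z, ‖z‖ = ‖z₀‖ → ‖q z‖ ≤ ‖q z₀‖) : (z₀ * deriv q z₀ * conj (q z₀)).im = 0 := by
  let γ : ℝ → ℂ := fun t => z₀ * exp (t * I)
  have hγ : HasDerivAt γ (z₀ * I) 0 := by
    simpa [γ] using (((hasDerivAt_id (0 : ℝ)).ofReal_comp.mul_const I).cexp).const_mul z₀
  have hγ0 : γ 0 = z₀ := by simp [γ]
  have hd : HasDerivAt (fun t => ‖q (γ t)‖ ^ 2) (2 * inner ℝ (q z₀) (deriv q z₀ * (z₀ * I))) 0 := by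
    have h := (hγ0.symm ▸ hq.hasDerivAt : HasDerivAt q (deriv q z₀) (γ 0)).comp (0 : ℝ) hγ
    simpa [hγ0] using h.norm_sq
  have hloc : IsLocalMax (fun t => ‖q (γ t)‖ ^ 2) 0 := by
    refine Filter.Eventually.of_forall fun t => ?_
    simp only [hγ0]
    gcongr
    exact hmax _ (by simp [γ])
  have hzero := hloc.hasDerivAt_eq_zero hd
  rw [Complex.inner] at hzero
  have h2 : (deriv q z₀ * (z₀ * I) * conj (q z₀)).re = -(z₀ * deriv q z₀ * conj (q z₀)).im := by
    simp only [mul_re, mul_im, I_re, I_im]; ring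
  linarith

lemma one_le_re_mul_deriv_mul_conj {q : ℂ → ℂ} {z₀ : ℂ} (hq : DifferentiableAt ℂ q z₀)
    (hz₀ : ‖q z₀‖ = 1) (hle : ∀ s ∈ Icc (0 : ℝ) 1, ‖q (s * z₀)‖ ≤ s) :
    1 ≤ (z₀ * deriv q z₀ * conj (q z₀)).re := by
  let f : ℝ → ℝ := fun s => ‖q (s * z₀)‖ ^ 2 - s ^ 2
  have hd : HasDerivAt f (2 * inner ℝ (q z₀) (deriv q z₀ * z₀) - 2) 1 := by
    have hρ : HasDerivAt (fun s : ℝ => (s : ℂ) * z₀) z₀ 1 := by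
      simpa using (hasDerivAt_id (1 : ℝ)).ofReal_comp.mul_const z₀
    have h := ((by simpa using hq.hasDerivAt : HasDerivAt q (deriv q z₀) ((1 : ℝ) * z₀))).comp
      (1 : ℝ) hρ
    have h2 := h.norm_sq.sub (hasDerivAt_pow 2 (1 : ℝ))
    simp only [Function.comp_def, ofReal_one, one_mul, Nat.cast_ofNat, one_pow, mul_one] at h2
    exact h2
  have hmax : IsMaxOn f (Icc 0 1) 1 := fun s hs => by
    have := hle s hs
    simp only [mem_ofPred_eq, f, ofReal_one, one_mul, hz₀]
    nlinarith [norm_nonneg (q (s * z₀))]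
  have hcone : (-1 : ℝ) ∈ posTangentConeAt (Icc (0 : ℝ) 1) 1 :=
    mem_posTangentConeAt_of_segment_subset (by norm_num [segment_eq_Icc'])
  have hnonpos := hmax.localize.hasFDerivWithinAt_nonpos hd.hasFDerivAt.hasFDerivWithinAt hcone
  rw [ContinuousLinearMap.toSpanSingleton_apply, smul_eq_mul, Complex.inner,
    mul_comm (deriv q z₀) z₀] at hnonpos
  linarith

lemma jack_lemma {q : ℂ → ℂ} {z₀ : ℂ}
    (hq : ∀ z ∈ closedBall (0 : ℂ) ‖z₀‖, DifferentiableAt ℂ q z) (hq0 : q 0 = 0)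
    (hle : ∀ z ∈ closedBall (0 : ℂ) ‖z₀‖, ‖q z‖ ≤ 1) (hz₀ : ‖q z₀‖ = 1) :
    ∃ m : ℝ, 1 ≤ m ∧ z₀ * deriv q z₀ = m * q z₀ := by
  have hr : 0 < ‖z₀‖ := norm_pos_iff.2 (by rintro rfl; simp [hq0] at hz₀)
  have hschwarz : ∀ s ∈ Icc (0 : ℝ) 1, ‖q (s * z₀)‖ ≤ s := by
    rintro s ⟨hs0, hs1⟩
    rcases hs1.lt_or_eq with hs1 | rfl
    · have hmaps : MapsTo q (ball 0 ‖z₀‖) (closedBall (q 0) 1) := fun z hz => by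
        rw [hq0, mem_closedBall_zero_iff]
        exact hle z (ball_subset_closedBall hz)
      have hz : (s : ℂ) * z₀ ∈ ball 0 ‖z₀‖ := by
        rw [mem_ball_zero_iff, norm_mul, norm_real, Real.norm_of_nonneg hs0]
        nlinarith
      have := dist_le_div_mul_dist_of_mapsTo_ball
        (fun z hz => (hq z (ball_subset_closedBall hz)).differentiableWithinAt) hmaps hz
      rwa [hq0, dist_zero_right, dist_zero_right, norm_mul, norm_real, Real.norm_of_nonneg hs0,
        one_div_mul_eq_div, mul_div_cancel_right₀ _ hr.ne'] at this
    · simp [hz₀]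
  have hz₀mem : z₀ ∈ closedBall (0 : ℂ) ‖z₀‖ := by simp
  set ζ := z₀ * deriv q z₀ * conj (q z₀)
  have him : ζ.im = 0 := im_mul_deriv_mul_conj_eq_zero (hq z₀ hz₀mem)
    fun z hz => hz₀ ▸ hle z (by simp [hz])
  refine ⟨ζ.re, one_le_re_mul_deriv_mul_conj (hq z₀ hz₀mem) hz₀ hschwarz, ?_⟩
  calc z₀ * deriv q z₀ = z₀ * deriv q z₀ * (conj (q z₀) * q z₀) := by simp [conj_mul', hz₀]
    _ = ζ * q z₀ := by ring
    _ = ζ.re * q z₀ := by rw [← re_add_im ζ, him]; simp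

lemma exists_forall_norm_lt_mem_of_notMem {E F : Type*} [NormedAddCommGroup E] [ProperSpace E]
    [TopologicalSpace F] {f : E → F} {U : Set F} (hU : IsOpen U) {z₁ : E}
    (hf : ContinuousOn f (closedBall 0 ‖z₁‖)) (hz₁ : f z₁ ∉ U) :
    ∃ z₀, ‖z₀‖ ≤ ‖z₁‖ ∧ f z₀ ∉ U ∧ ∀ z, ‖z‖ < ‖z₀‖ → f z ∈ U := by
  set K := closedBall 0 ‖z₁‖ ∩ f ⁻¹' Uᶜ
  have hK : IsCompact K := (isCompact_closedBall 0 ‖z₁‖).of_isClosed_subset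
    (hf.preimage_isClosed_of_isClosed isClosed_closedBall hU.isClosed_compl) inter_subset_left
  obtain ⟨z₀, ⟨hz₀, hz₀U⟩, hmin⟩ :=
    hK.exists_isMinOn ⟨z₁, by simp, hz₁⟩ continuous_norm.continuousOn
  refine ⟨z₀, mem_closedBall_zero_iff.1 hz₀, hz₀U, fun z hz => ?_⟩
  by_contra hzU
  have hzK : z ∈ K :=
    ⟨mem_closedBall_zero_iff.2 (hz.le.trans (mem_closedBall_zero_iff.1 hz₀)), hzU⟩
  exact (hmin hzK).not_gt hz

lemma log_exp_of_norm_le_one {ζ : ℂ} (h : ‖ζ‖ ≤ 1) : log (exp ζ) = ζ := by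
  have := abs_le.1 ((abs_im_le_norm ζ).trans h)
  exact log_exp (by linarith [Real.pi_gt_three]) (by linarith [Real.pi_gt_three])

lemma exp_mem_slitPlane_of_norm_le_one {ζ : ℂ} (h : ‖ζ‖ ≤ 1) : exp ζ ∈ slitPlane := by
  have := abs_le.1 ((abs_im_le_norm ζ).trans h)
  refine Or.inl ?_
  rw [exp_re]
  exact mul_pos (Real.exp_pos _) (Real.cos_pos_of_mem_Ioo ⟨by linarith [Real.pi_gt_three],
    by linarith [Real.pi_gt_three]⟩)

lemma subord_exp_of_forall_mem {p : ℂ → ℂ} (hp : DifferentiableOn ℂ p unitDisk) (hp0 : p 0 = 1)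
    (h : ∀ z ∈ unitDisk, p z ∈ exp '' unitDisk) : Subord p exp := by
  have hlog : ∀ z ∈ unitDisk, ∃ ζ, ‖ζ‖ < 1 ∧ p z = exp ζ ∧ log (p z) = ζ := fun z hz => by
    obtain ⟨ζ, hζ, he⟩ := h z hz
    have hζ : ‖ζ‖ < 1 := mem_ball_zero_iff.1 hζ
    exact ⟨ζ, hζ, he.symm, he ▸ log_exp_of_norm_le_one hζ.le⟩
  refine ⟨fun z => log (p z), fun z hz => ?_, by simp [hp0], fun z hz => ?_, fun z hz => ?_⟩
  all_goals obtain ⟨ζ, hζ, he, hl⟩ := hlog z hz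
  · exact ((hp.differentiableAt (isOpen_ball.mem_nhds hz)).clog
      (he ▸ exp_mem_slitPlane_of_norm_le_one hζ.le)).differentiableWithinAt
  · simpa [hl] using hζ
  · show p z = exp (log (p z))
    rw [hl, he]

lemma exists_deriv_eq_mul_exp_of_notMem {p : ℂ → ℂ} (hp : DifferentiableOn ℂ p unitDisk)
    (hp0 : p 0 = 1) {z₀ : ℂ} (hz₀ : z₀ ∈ unitDisk)
    (hin : ∀ z, ‖z‖ < ‖z₀‖ → p z ∈ exp '' unitDisk) (hout : p z₀ ∉ exp '' unitDisk) :
    ∃ c : ℂ, ‖c‖ = 1 ∧ p z₀ = exp c ∧ ∃ m : ℝ, 1 ≤ m ∧ z₀ * deriv p z₀ = m * c * exp c := by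
  have hball : closedBall (0 : ℂ) ‖z₀‖ ⊆ unitDisk :=
    closedBall_subset_ball (mem_ball_zero_iff.1 hz₀)
  have hpd : ∀ z ∈ closedBall (0 : ℂ) ‖z₀‖, DifferentiableAt ℂ p z := fun z hz =>
    hp.differentiableAt (isOpen_ball.mem_nhds (hball hz))
  have hr : ‖z₀‖ ≠ 0 := fun h =>
    hout ⟨0, mem_ball_self one_pos, by rw [exp_zero, norm_eq_zero.1 h, hp0]⟩
  have hcl : ∀ z ∈ closedBall (0 : ℂ) ‖z₀‖, ∃ ζ, ‖ζ‖ ≤ 1 ∧ exp ζ = p z := by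
    intro z hz
    rw [← closure_ball 0 hr] at hz hball
    have hK : IsClosed (exp '' closedBall (0 : ℂ) 1) :=
      ((isCompact_closedBall 0 1).image continuous_exp).isClosed
    have hsub : p '' ball 0 ‖z₀‖ ⊆ exp '' closedBall 0 1 := by
      rintro _ ⟨w, hw, rfl⟩
      obtain ⟨ζ, hζ, he⟩ := hin w (mem_ball_zero_iff.1 hw)
      exact ⟨ζ, ball_subset_closedBall hζ, he⟩
    obtain ⟨ζ, hζ, he⟩ := closure_minimal hsub hK
      ((hp.continuousOn.mono hball).image_closure (mem_image_of_mem p hz))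
    exact ⟨ζ, mem_closedBall_zero_iff.1 hζ, he⟩
  let q := fun z => log (p z)
  have hq : ∀ z ∈ closedBall (0 : ℂ) ‖z₀‖, ‖q z‖ ≤ 1 ∧ p z ∈ slitPlane ∧ exp (q z) = p z := by
    intro z hz
    obtain ⟨ζ, hζ, he⟩ := hcl z hz
    have hlog : q z = ζ := by simp only [q, ← he, log_exp_of_norm_le_one hζ]
    exact ⟨hlog ▸ hζ, he ▸ exp_mem_slitPlane_of_norm_le_one hζ, by rw [hlog, he]⟩
  have hqd : ∀ z ∈ closedBall (0 : ℂ) ‖z₀‖, HasDerivAt q (deriv p z / p z) z := fun z hz =>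
    (hpd z hz).hasDerivAt.clog (hq z hz).2.1
  have hz₀mem : z₀ ∈ closedBall (0 : ℂ) ‖z₀‖ := by simp
  obtain ⟨hq₀, -, hpq₀⟩ := hq z₀ hz₀mem
  have hnorm : ‖q z₀‖ = 1 :=
    hq₀.antisymm (not_lt.1 fun h => hout ⟨q z₀, mem_ball_zero_iff.2 h, hpq₀⟩)
  obtain ⟨m, hm, hjack⟩ := jack_lemma (fun z hz => (hqd z hz).differentiableAt)
    (by simp [q, hp0]) (fun z hz => (hq z hz).1) hnorm
  refine ⟨q z₀, hnorm, hpq₀.symm, m, hm, ?_⟩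
  have hp₀ : p z₀ ≠ 0 := hpq₀ ▸ exp_ne_zero _
  rw [(hqd z₀ hz₀mem).deriv] at hjack
  calc z₀ * deriv p z₀ = z₀ * (deriv p z₀ / p z₀) * p z₀ := by field_simp
    _ = m * q z₀ * exp (q z₀) := by rw [hjack, hpq₀]

theorem stmt_2 (α β : ℝ) (hα : 0 < α) (hβ : 0 < β)
    (hcond : Real.exp 1 ≤ α * (Real.exp 1 - 1) + β * Real.exp 1)
    (p : ℂ → ℂ) (hp : DifferentiableOn ℂ p unitDisk) (hp0 : p 0 = 1)
    (hsub : Subord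
      (fun z => ((1 : ℂ) - (α : ℂ)) * p z + (α : ℂ) * (p z) ^ 2 + (β : ℂ) * z * deriv p z)
      (fun z => 1 + z)) :
    Subord p Complex.exp := by
  obtain ⟨w, -, -, hw_lt, hw_eq⟩ := hsub
  refine subord_exp_of_forall_mem hp hp0 fun z₁ hz₁ => ?_
  by_contra hz₁Ω
  obtain ⟨z₀, hz₀z₁, hz₀Ω, hin⟩ := exists_forall_norm_lt_mem_of_notMem
    (isOpenMap_exp _ isOpen_ball) (hp.continuousOn.mono
      (closedBall_subset_ball (mem_ball_zero_iff.1 hz₁))) hz₁Ω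
  have hz₀ : z₀ ∈ unitDisk := mem_ball_zero_iff.2 (hz₀z₁.trans_lt (mem_ball_zero_iff.1 hz₁))
  obtain ⟨c, hc, hpc, m, hm, hderiv⟩ := exists_deriv_eq_mul_exp_of_notMem hp hp0 hz₀ hin hz₀Ω
  have hw : w z₀ = psi α β (exp c) (m * c * exp c) - 1 := by
    have := hw_eq z₀ hz₀
    rw [← hderiv, ← hpc, psi]
    linear_combination -this
  have hlt := hw_lt z₀ hz₀
  rw [hw] at hlt
  exact (one_le_norm_psi_exp_sub_one hα.le hβ.le hcond hm hc).not_gt hlt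
end
end

section
/- Let β be a real number with β ≥ (e + 2 − √2·(e−1)) / (e·(√2 − 1)), and let p ∈ H₁. If the function z ↦ p(z) + β·z·p′(z) is subordinate to z ↦ (2+2z)/(2−z) on 𝔻, then p is subordinate to z ↦ e^z on 𝔻. -/
open Complex

noncomputable section

/-!
Put `P = p + β z p'` and `q w = (2 + 2w)/(2 - w)`. Since `d/du (u p(u^β z)) = P(u^β z)`, we have
`p z = ∫₀¹ P(u^β z) du`. By Schwarz's lemma `P ζ` lies in the image under `q` of the closed disk
`|w| ≤ s = |ζ|`, which is the disk with real diameter `[q (-s), q s]`. Averaging such disks over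
`u`, `p z` lies in the disk with diameter `[∫₀¹ q (-u^β), ∫₀¹ q (u^β)]`. For `β ≥ 2` (the
threshold is about `2.03`) we have `u^β ≤ u²`, and the bounds `q (-t) ≥ (1 - t)(2 - t)/2`,
`q t ≤ 1 + 3t/2 + 3t²/2` on `[0, 1]` put this inside the disk with diameter `[3/5, 9/5]`.
That disk lies in the sector `|arg ζ| ≤ π/6` and in the annulus `3/5 ≤ |ζ| ≤ 9/5`, so
`|log ζ|² ≤ (4/5)² + 1/3 < 1` there, and `log ∘ p` is a Schwarz function exhibiting `p ≺ exp`.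
-/

open Set MeasureTheory

lemma two_le_threshold :
    2 ≤ (Real.exp 1 + 2 - Real.sqrt 2 * (Real.exp 1 - 1)) / (Real.exp 1 * (Real.sqrt 2 - 1)) := by
  have he := Real.exp_one_lt_d9
  have hs : Real.sqrt 2 ^ 2 = 2 := Real.sq_sqrt zero_le_two
  have hs1 : 1.414 < Real.sqrt 2 := by nlinarith [Real.sqrt_nonneg 2]
  rw [le_div_iff₀ (by nlinarith [Real.exp_pos 1])]
  nlinarith

def diamDisk (a b : ℝ) : Set ℂ := Metric.closedBall (((a + b) / 2 : ℝ) : ℂ) ((b - a) / 2)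

lemma diamDisk_subset_diamDisk {a b a' b' : ℝ} (ha : a' ≤ a) (hb : b ≤ b') :
    diamDisk a b ⊆ diamDisk a' b' := by
  refine Metric.closedBall_subset_closedBall' ?_
  rw [dist_eq, ← ofReal_sub, norm_real, Real.norm_eq_abs]
  cases abs_cases ((a + b) / 2 - (a' + b') / 2) <;> linarith

lemma le_re_of_mem_diamDisk {a b : ℝ} {ζ : ℂ} (hζ : ζ ∈ diamDisk a b) : a ≤ ζ.re := by
  have h := (re_le_norm (((a + b) / 2 : ℝ) - ζ)).trans
    ((norm_sub_rev _ _).trans_le (dist_eq ζ _ ▸ Metric.mem_closedBall.mp hζ))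
  simp only [sub_re, ofReal_re] at h
  linarith

lemma integral_mem_diamDisk {f : ℝ → ℂ} {a b : ℝ → ℝ} {c d : ℝ} (hcd : c ≤ d)
    (hf : IntervalIntegrable f volume c d) (ha : IntervalIntegrable a volume c d)
    (hb : IntervalIntegrable b volume c d) (h : ∀ u ∈ Icc c d, f u ∈ diamDisk (a u) (b u)) :
    ∫ u in c..d, f u ∈ diamDisk (∫ u in c..d, a u) (∫ u in c..d, b u) := by
  have hab := (ha.add hb).div_const 2
  have habC : IntervalIntegrable (fun u => (((a u + b u) / 2 : ℝ) : ℂ)) volume c d :=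
    ⟨hab.1.ofReal, hab.2.ofReal⟩
  have hcenter : ((((∫ u in c..d, a u) + ∫ u in c..d, b u) / 2 : ℝ) : ℂ) =
      ∫ u in c..d, (((a u + b u) / 2 : ℝ) : ℂ) := by
    rw [intervalIntegral.integral_ofReal, intervalIntegral.integral_div,
      intervalIntegral.integral_add ha hb]
  have hradius : ((∫ u in c..d, b u) - ∫ u in c..d, a u) / 2 = ∫ u in c..d, (b u - a u) / 2 := by
    rw [intervalIntegral.integral_div, intervalIntegral.integral_sub hb ha]
  rw [diamDisk, Metric.mem_closedBall, dist_eq, hcenter, hradius,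
    ← intervalIntegral.integral_sub hf habC]
  refine intervalIntegral.norm_integral_le_of_norm_le hcd (ae_of_all _ fun u hu => ?_)
    ((hb.sub ha).div_const 2)
  simpa [diamDisk, dist_eq] using h u (Ioc_subset_Icc_self hu)

-- `lowerEnd s = q (-s)` and `upperEnd s = q s`.
def lowerEnd (s : ℝ) : ℝ := 2 * (1 - s) / (2 + s)

def upperEnd (s : ℝ) : ℝ := 2 * (1 + s) / (2 - s)

lemma mobius_mem_diamDisk {w : ℂ} {s : ℝ} (hw : ‖w‖ ≤ s) (hs : s < 2) :
    (2 + 2 * w) / (2 - w) ∈ diamDisk (lowerEnd s) (upperEnd s) := by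
  have hs0 : 0 ≤ s := (norm_nonneg w).trans hw
  have h4 : 0 < 4 - s ^ 2 := by nlinarith
  have hw2 : 0 < ‖2 - w‖ := by
    have := norm_sub_norm_le (2 : ℂ) w
    norm_num at this
    linarith
  have hs2 : 2 - s ≠ 0 := by linarith
  have hs2' : 2 + s ≠ 0 := by linarith
  have hcenter : (lowerEnd s + upperEnd s) / 2 = (4 + 2 * s ^ 2) / (4 - s ^ 2) := by
    rw [lowerEnd, upperEnd]
    field_simp
    ring
  have hradius : (upperEnd s - lowerEnd s) / 2 = 6 * s / (4 - s ^ 2) := by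
    rw [lowerEnd, upperEnd]
    field_simp
    ring
  have hkey : ‖2 * w - s ^ 2‖ ≤ s * ‖2 - w‖ := by
    have hnorm : w.re * w.re + w.im * w.im ≤ s ^ 2 := by
      rw [← normSq_apply, ← Complex.sq_norm]
      exact pow_le_pow_left₀ (norm_nonneg w) hw 2
    rw [← pow_le_pow_iff_left₀ (norm_nonneg _) (by positivity) two_ne_zero, mul_pow,
      Complex.sq_norm, Complex.sq_norm, normSq_apply, normSq_apply]
    simp only [sub_re, sub_im, mul_re, mul_im, ofReal_re, ofReal_im, re_ofNat, im_ofNat,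
      ← ofReal_pow]
    nlinarith [mul_nonneg h4.le (sub_nonneg.mpr hnorm)]
  have hdiff : (2 + 2 * w) / (2 - w) - (((4 + 2 * s ^ 2) / (4 - s ^ 2) : ℝ) : ℂ) =
      6 * (2 * w - s ^ 2) / ((2 - w) * (4 - s ^ 2 : ℝ)) := by
    rw [ofReal_div, div_sub_div _ _ (norm_pos_iff.mp hw2) (ofReal_ne_zero.mpr h4.ne')]
    push_cast
    ring
  rw [diamDisk, hcenter, hradius, Metric.mem_closedBall, dist_eq, hdiff, norm_div, norm_mul,
    norm_mul, norm_real, Real.norm_of_nonneg h4.le, div_le_div_iff₀ (by positivity) h4]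
  norm_num
  nlinarith

lemma abs_arg_le_abs_im_div_re {z : ℂ} (hz : 0 < z.re) : |arg z| ≤ |z.im / z.re| := by
  have hlt : |arg z| < Real.pi / 2 := abs_arg_lt_pi_div_two_iff.mpr (Or.inl hz)
  calc |arg z| ≤ Real.tan |arg z| := Real.le_tan (abs_nonneg _) hlt
    _ = |Real.tan (arg z)| := by
      rcases abs_cases (arg z) with ⟨h, h0⟩ | ⟨h, h0⟩ <;> rw [h] at hlt ⊢
      · rw [abs_of_nonneg (Real.tan_nonneg_of_nonneg_of_le_pi_div_two h0 hlt.le)]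
      · rw [Real.tan_neg, abs_of_nonpos (Real.tan_nonpos_of_nonpos_of_neg_pi_div_two_le h0.le
          (by linarith))]
    _ = |z.im / z.re| := by rw [tan_arg]

lemma norm_log_lt_one_of_mem_diamDisk {ζ : ℂ} (hζ : ζ ∈ diamDisk (3 / 5) (9 / 5)) :
    ‖log ζ‖ < 1 := by
  have hre : 3 / 5 ≤ ζ.re := le_re_of_mem_diamDisk hζ
  have hnorm_le : ‖ζ‖ ≤ 9 / 5 := (norm_le_of_mem_closedBall hζ).trans_eq (by norm_num)
  have hnorm_ge : 3 / 5 ≤ ‖ζ‖ := hre.trans (re_le_norm ζ)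
  have hball : (ζ.re - 6 / 5) ^ 2 + ζ.im ^ 2 ≤ (3 / 5) ^ 2 := by
    have h := Metric.mem_closedBall.mp hζ
    rw [dist_eq, ← pow_le_pow_iff_left₀ (norm_nonneg _) (by norm_num) two_ne_zero,
      Complex.sq_norm, normSq_apply] at h
    norm_num at h
    nlinarith
  have hlog_le : Real.log ‖ζ‖ ≤ 4 / 5 := by
    linarith [Real.log_le_sub_one_of_pos (by linarith : 0 < ‖ζ‖)]
  have hlog_ge : -(2 / 3) ≤ Real.log ‖ζ‖ := by
    have hinv : ‖ζ‖⁻¹ ≤ 5 / 3 := by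
      rw [inv_le_comm₀ (by linarith) (by norm_num)]
      linarith
    linarith [Real.one_sub_inv_le_log_of_pos (by linarith : 0 < ‖ζ‖)]
  have harg : arg ζ ^ 2 ≤ 1 / 3 := by
    have hsq_arg := pow_le_pow_left₀ (abs_nonneg _) (abs_arg_le_abs_im_div_re (by linarith)) 2
    have hsector : ζ.im ^ 2 / ζ.re ^ 2 ≤ 1 / 3 := by
      rw [div_le_iff₀ (by positivity)]
      nlinarith [sq_nonneg (2 * ζ.re - 9 / 5)]
    rw [sq_abs, sq_abs, div_pow] at hsq_arg
    linarith
  have hsq : ‖log ζ‖ ^ 2 = Real.log ‖ζ‖ ^ 2 + arg ζ ^ 2 := by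
    rw [Complex.sq_norm, normSq_apply, log_re, log_im]
    ring
  nlinarith

lemma continuousOn_add_mul_deriv {p : ℂ → ℂ} (hp : DifferentiableOn ℂ p unitDisk) (c : ℂ) :
    ContinuousOn (fun z => p z + c * z * deriv p z) unitDisk :=
  hp.continuousOn.add ((continuousOn_const.mul continuousOn_id).mul
    (hp.deriv Metric.isOpen_ball).continuousOn)

lemma norm_rpow_mul_le {β u : ℝ} {z : ℂ} (hu : u ∈ Icc (0 : ℝ) 1) (hz : z ∈ unitDisk) :
    ‖((u ^ β : ℝ) : ℂ) * z‖ ≤ u ^ β := by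
  rw [norm_mul, norm_real, Real.norm_of_nonneg (Real.rpow_nonneg hu.1 β)]
  exact mul_le_of_le_one_right (Real.rpow_nonneg hu.1 β) (mem_ball_zero_iff.mp hz).le

lemma mapsTo_rpow_mul_unitDisk {β : ℝ} (hβ : 0 ≤ β) {z : ℂ} (hz : z ∈ unitDisk) :
    MapsTo (fun u : ℝ => ((u ^ β : ℝ) : ℂ) * z) (Icc 0 1) unitDisk := fun u hu => by
  rw [unitDisk, mem_ball_zero_iff, norm_mul, norm_real,
    Real.norm_of_nonneg (Real.rpow_nonneg hu.1 β)]
  exact (mul_le_of_le_one_left (norm_nonneg z) (Real.rpow_le_one hu.1 hu.2 hβ)).trans_lt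
    (mem_ball_zero_iff.mp hz)

lemma ContinuousOn.intervalIntegrable_comp_rpow_mul {f : ℂ → ℂ} (hf : ContinuousOn f unitDisk)
    {β : ℝ} (hβ : 0 ≤ β) {z : ℂ} (hz : z ∈ unitDisk) :
    IntervalIntegrable (fun u : ℝ => f (((u ^ β : ℝ) : ℂ) * z)) volume 0 1 :=
  (hf.comp (by fun_prop : Continuous fun u : ℝ => ((u ^ β : ℝ) : ℂ) * z).continuousOn
    (mapsTo_rpow_mul_unitDisk hβ hz)).intervalIntegrable_of_Icc zero_le_one

theorem integral_add_mul_deriv_comp_rpow_mul {p : ℂ → ℂ} (hp : DifferentiableOn ℂ p unitDisk)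
    {β : ℝ} (hβ : 0 ≤ β) {z : ℂ} (hz : z ∈ unitDisk) :
    ∫ u in (0 : ℝ)..1, (p ((u ^ β : ℝ) * z) + β * ((u ^ β : ℝ) * z) * deriv p ((u ^ β : ℝ) * z))
      = p z := by
  have hmaps := mapsTo_rpow_mul_unitDisk hβ hz
  have hcont : ContinuousOn (fun u : ℝ => (u : ℂ) * p ((u ^ β : ℝ) * z)) (Icc 0 1) :=
    continuous_ofReal.continuousOn.mul (hp.continuousOn.comp
      (by fun_prop : Continuous fun u : ℝ => ((u ^ β : ℝ) : ℂ) * z).continuousOn hmaps)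
  have hderiv : ∀ u ∈ Ioo (0 : ℝ) 1, HasDerivAt (fun u : ℝ => (u : ℂ) * p ((u ^ β : ℝ) * z))
      (p ((u ^ β : ℝ) * z) + β * ((u ^ β : ℝ) * z) * deriv p ((u ^ β : ℝ) * z)) u := by
    intro u hu
    have hg : HasDerivAt (fun v : ℝ => ((v ^ β : ℝ) : ℂ) * z)
        (((β * u ^ (β - 1) : ℝ) : ℂ) * z) u :=
      (Real.hasDerivAt_rpow_const (Or.inl hu.1.ne')).ofReal_comp.mul_const z
    have hpg := (hp.differentiableAt (Metric.isOpen_ball.mem_nhds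
      (hmaps (Ioo_subset_Icc_self hu)))).hasDerivAt.comp u hg
    refine ((hasDerivAt_id u).ofReal_comp.mul hpg).congr_deriv ?_
    have hpow : u * (β * u ^ (β - 1)) = β * u ^ β := by
      rw [Real.rpow_sub_one hu.1.ne']
      field_simp [hu.1.ne']
    have hpowC : (u : ℂ) * ((β * u ^ (β - 1) : ℝ) : ℂ) = β * ((u ^ β : ℝ) : ℂ) := by
      exact_mod_cast congrArg ((↑) : ℝ → ℂ) hpow
    simp only [id, Function.comp_apply, ofReal_one, one_mul]
    linear_combination (z * deriv p ((u ^ β : ℝ) * z)) * hpowC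
  rw [intervalIntegral.integral_eq_sub_of_hasDerivAt_of_le zero_le_one hcont hderiv
    ((continuousOn_add_mul_deriv hp β).intervalIntegrable_comp_rpow_mul hβ hz)]
  simp

lemma ContinuousOn.intervalIntegrable_comp_rpow {g : ℝ → ℝ} (hg : ContinuousOn g (Icc 0 1))
    {β : ℝ} (hβ : 0 ≤ β) : IntervalIntegrable (fun u : ℝ => g (u ^ β)) volume 0 1 :=
  (hg.comp (Real.continuous_rpow_const hβ).continuousOn fun _ hu =>
    ⟨Real.rpow_nonneg hu.1 β, Real.rpow_le_one hu.1 hu.2 hβ⟩).intervalIntegrable_of_Icc zero_le_one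

lemma continuousOn_lowerEnd : ContinuousOn lowerEnd (Icc 0 1) :=
  ContinuousOn.div (by fun_prop) (by fun_prop) fun _ ht => by linarith [ht.1]

lemma continuousOn_upperEnd : ContinuousOn upperEnd (Icc 0 1) :=
  ContinuousOn.div (by fun_prop) (by fun_prop) fun _ ht => by linarith [ht.2]

lemma rpow_le_sq {β u : ℝ} (hβ : 2 ≤ β) (hu : u ∈ Icc (0 : ℝ) 1) : u ^ β ≤ u ^ 2 := by
  simpa using Real.rpow_le_rpow_of_exponent_ge' hu.1 hu.2 zero_le_two hβ

lemma three_fifths_le_integral_lowerEnd_rpow {β : ℝ} (hβ : 2 ≤ β) :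
    3 / 5 ≤ ∫ u in (0 : ℝ)..1, lowerEnd (u ^ β) := by
  have hpoly : ∫ u in (0 : ℝ)..1, (1 - 3 / 2 * u ^ 2 + 1 / 2 * u ^ 4) = 3 / 5 := by
    rw [intervalIntegral.integral_add, intervalIntegral.integral_sub] <;> norm_num [integral_pow]
  rw [← hpoly]
  refine intervalIntegral.integral_mono_on zero_le_one
    ((by fun_prop : Continuous fun u : ℝ => 1 - 3 / 2 * u ^ 2 + 1 / 2 * u ^ 4).intervalIntegrable
      _ _)
    (continuousOn_lowerEnd.intervalIntegrable_comp_rpow (by linarith)) fun u hu => ?_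
  have h0 := Real.rpow_nonneg hu.1 β
  have h1 := rpow_le_sq hβ hu
  have h2 : u ^ 2 ≤ 1 := pow_le_one₀ hu.1 hu.2
  rw [lowerEnd, le_div_iff₀ (by linarith)]
  nlinarith [mul_nonneg (mul_nonneg (sub_nonneg.mpr h1) (by linarith : 0 ≤ 3 - u ^ 2 - u ^ β))
    (by linarith : 0 ≤ 2 + u ^ β), mul_nonneg h0 h0,
    mul_nonneg (mul_nonneg h0 h0) (sub_nonneg.mpr (h1.trans h2))]

lemma integral_upperEnd_rpow_le_nine_fifths {β : ℝ} (hβ : 2 ≤ β) :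
    ∫ u in (0 : ℝ)..1, upperEnd (u ^ β) ≤ 9 / 5 := by
  have hpoly : ∫ u in (0 : ℝ)..1, (1 + 3 / 2 * u ^ 2 + 3 / 2 * u ^ 4) = 9 / 5 := by
    rw [intervalIntegral.integral_add, intervalIntegral.integral_add] <;> norm_num [integral_pow]
  rw [← hpoly]
  refine intervalIntegral.integral_mono_on zero_le_one
    (continuousOn_upperEnd.intervalIntegrable_comp_rpow (by linarith))
    ((by fun_prop : Continuous fun u : ℝ => 1 + 3 / 2 * u ^ 2 + 3 / 2 * u ^ 4).intervalIntegrable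
      _ _)
    fun u hu => ?_
  have h0 := Real.rpow_nonneg hu.1 β
  have h1 := rpow_le_sq hβ hu
  have h2 : u ^ 2 ≤ 1 := pow_le_one₀ hu.1 hu.2
  rw [upperEnd, div_le_iff₀ (by linarith)]
  nlinarith [mul_nonneg h0 h0, mul_nonneg (mul_nonneg h0 h0) (sub_nonneg.mpr (h1.trans h2)),
    mul_nonneg (sub_nonneg.mpr h1) h0]

lemma Subord.exists_norm_le {f g : ℂ → ℂ} (h : Subord f g) {z : ℂ} (hz : z ∈ unitDisk) :
    ∃ v, ‖v‖ ≤ ‖z‖ ∧ f z = g v := by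
  obtain ⟨w, hw, hw0, hw1, hfg⟩ := h
  exact ⟨w z, norm_le_norm_of_mapsTo_ball hw
    (fun x hx => mem_closedBall_zero_iff.mpr (hw1 x hx).le) hw0 (mem_ball_zero_iff.mp hz),
    hfg z hz⟩

lemma subord_exp_of_norm_log_lt_one {p : ℂ → ℂ} (hp : DifferentiableOn ℂ p unitDisk)
    (hp0 : p 0 = 1) (hslit : ∀ z ∈ unitDisk, p z ∈ slitPlane)
    (hlog : ∀ z ∈ unitDisk, ‖log (p z)‖ < 1) : Subord p exp :=
  ⟨fun z => log (p z), fun z hz => (hp z hz).clog (hslit z hz), by simp [hp0], hlog,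
    fun z hz => (exp_log (slitPlane_ne_zero (hslit z hz))).symm⟩

lemma mem_diamDisk_of_subord {β : ℝ} (hβ : 2 ≤ β) {p : ℂ → ℂ}
    (hp : DifferentiableOn ℂ p unitDisk)
    (hsub : Subord (fun z => p z + (β : ℂ) * z * deriv p z) (fun z => (2 + 2 * z) / (2 - z)))
    {z : ℂ} (hz : z ∈ unitDisk) : p z ∈ diamDisk (3 / 5) (9 / 5) := by
  have hβ0 : 0 ≤ β := by linarith
  rw [← integral_add_mul_deriv_comp_rpow_mul hp hβ0 hz]
  refine diamDisk_subset_diamDisk (three_fifths_le_integral_lowerEnd_rpow hβ)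
    (integral_upperEnd_rpow_le_nine_fifths hβ) (integral_mem_diamDisk zero_le_one
      ((continuousOn_add_mul_deriv hp β).intervalIntegrable_comp_rpow_mul hβ0 hz)
      (continuousOn_lowerEnd.intervalIntegrable_comp_rpow hβ0)
      (continuousOn_upperEnd.intervalIntegrable_comp_rpow hβ0) fun u hu => ?_)
  obtain ⟨v, hv, heq⟩ := hsub.exists_norm_le (mapsTo_rpow_mul_unitDisk hβ0 hz hu)
  rw [heq]
  exact mobius_mem_diamDisk (hv.trans (norm_rpow_mul_le hu hz))
    ((Real.rpow_le_one hu.1 hu.2 hβ0).trans_lt one_lt_two)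

theorem stmt_3 (β : ℝ)
    (hβ : (Real.exp 1 + 2 - Real.sqrt 2 * (Real.exp 1 - 1)) /
        (Real.exp 1 * (Real.sqrt 2 - 1)) ≤ β)
    (p : ℂ → ℂ) (hp : DifferentiableOn ℂ p unitDisk) (hp0 : p 0 = 1)
    (hsub : Subord (fun z => p z + (β : ℂ) * z * deriv p z)
      (fun z => (2 + 2 * z) / (2 - z))) :
    Subord p Complex.exp := by
  have hmem : ∀ z ∈ unitDisk, p z ∈ diamDisk (3 / 5) (9 / 5) := fun z hz =>
    mem_diamDisk_of_subord (two_le_threshold.trans hβ) hp hsub hz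
  refine subord_exp_of_norm_log_lt_one hp hp0 (fun z hz => ?_)
    fun z hz => norm_log_lt_one_of_mem_diamDisk (hmem z hz)
  exact mem_slitPlane_iff.mpr (Or.inl (by linarith [le_re_of_mem_diamDisk (hmem z hz)]))
end
end

section
/- Let β be a real number with β ≥ (e + 2 − √2·(e−1)) / (√2 − 1), and let p ∈ H₁ with p(z) ≠ 0 for all z ∈ 𝔻. If the function z ↦ p(z) + β·z·p′(z)/p(z) is subordinate to z ↦ (2+2z)/(2−z) on 𝔻, then p is subordinate to z ↦ e^z on 𝔻. -/
open Complex

noncomputable section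

/-!
Write `p = exp ∘ g` with `g` holomorphic and `g 0 = 0` (on a disk `p' / p` has a primitive). It
suffices to show `‖g‖ < 1`, for then `g` is itself the Schwarz function. Otherwise take a point
`z₀` of least modulus with `‖g z₀‖ = 1`; by Jack's lemma `z₀ g'(z₀) = k g(z₀)` with `k ≥ 1`, so
with `ζ = g z₀` on the unit circle, `p z₀ + β z₀ p'(z₀) / p z₀ = e^ζ + β k ζ`. As `β k ≥ 4`, the
real part of `conj ζ (e^ζ + β k ζ - 2)` is at least `2`, so this value lies outside the disk
`|w - 2| < 2`, which is the image of the unit disk under `(2 + 2z) / (2 - z)`.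
-/

open ComplexConjugate Metric Set

theorem four_le_critical_beta :
    (4 : ℝ) ≤ (Real.exp 1 + 2 - Real.sqrt 2 * (Real.exp 1 - 1)) / (Real.sqrt 2 - 1) := by
  have hs2 : Real.sqrt 2 ^ 2 = 2 := Real.sq_sqrt (by norm_num)
  have hs2_lo : (1.414 : ℝ) < Real.sqrt 2 := by nlinarith [Real.sqrt_nonneg 2]
  have hs2_hi : Real.sqrt 2 < 1.415 := by nlinarith [Real.sqrt_nonneg 2]
  have he_lo := Real.exp_one_gt_d9
  have he_hi := Real.exp_one_lt_d9
  rw [le_div_iff₀ (by linarith)]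
  nlinarith

theorem norm_mobius_sub_two_lt_two {ω : ℂ} (hω : ‖ω‖ < 1) :
    ‖(2 + 2 * ω) / (2 - ω) - 2‖ < 2 := by
  have hne : (2 : ℂ) - ω ≠ 0 := fun h => by
    rw [← sub_eq_zero.mp h] at hω; norm_num at hω
  rw [show (2 + 2 * ω) / (2 - ω) - 2 = (4 * ω - 2) / (2 - ω) by field_simp; ring, norm_div,
    div_lt_iff₀ (norm_pos_iff.mpr hne)]
  have hω2 : ω.re * ω.re + ω.im * ω.im < 1 := by
    rw [← normSq_apply, ← Complex.sq_norm]; nlinarith [norm_nonneg ω]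
  refine lt_of_pow_lt_pow_left₀ 2 (by positivity) ?_
  rw [mul_pow, Complex.sq_norm, Complex.sq_norm, normSq_apply, normSq_apply]
  simp only [sub_re, sub_im, mul_re, mul_im, re_ofNat, im_ofNat]
  nlinarith

theorem two_le_norm_exp_add_mul_sub_two {ζ : ℂ} (hζ : ‖ζ‖ = 1) {s : ℝ} (hs : 4 ≤ s) :
    2 ≤ ‖exp ζ + s * ζ - 2‖ := by
  set w := exp ζ + s * ζ - 2
  set x := ζ.re
  set y := ζ.im
  have hxy : x * x + y * y = 1 := by
    rw [← normSq_apply, ← Complex.sq_norm, hζ, one_pow]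
  have hx : |x| ≤ 1 := abs_le_one_iff_mul_self_le_one.mpr (by nlinarith)
  have hy : |y| ≤ 1 := abs_le_one_iff_mul_self_le_one.mpr (by nlinarith)
  have hre : (conj ζ * w).re = Real.exp x * (x * Real.cos y + y * Real.sin y) + s - 2 * x := by
    simp only [w, mul_re, conj_re, conj_im, sub_re, sub_im, add_re, add_im, mul_im, ofReal_re,
      ofReal_im, exp_re, exp_im, re_ofNat, im_ofNat]
    linear_combination s * hxy
  obtain ⟨hy_lo, hy_hi⟩ := abs_le.mp hy
  have hcos : 0 ≤ Real.cos y := Real.cos_nonneg_of_neg_pi_div_two_le_of_le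
    (by linarith [Real.pi_gt_three]) (by linarith [Real.pi_gt_three])
  have hysin : 0 ≤ y * Real.sin y := by
    rcases le_total 0 y with h | h
    · exact mul_nonneg h (Real.sin_nonneg_of_nonneg_of_le_pi h (by linarith [Real.pi_gt_three]))
    · exact mul_nonneg_of_nonpos_of_nonpos h
        (Real.sin_nonpos_of_nonpos_of_neg_pi_le h (by linarith [Real.pi_gt_three]))
  have hxcos : 2 * x - 2 ≤ Real.exp x * (x * Real.cos y) := by
    rcases le_total 0 x with h | h
    · have := mul_nonneg (Real.exp_pos x).le (mul_nonneg h hcos)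
      linarith [(abs_le.mp hx).2]
    · have : Real.exp x * Real.cos y ≤ 1 :=
        mul_le_one₀ (Real.exp_le_one_iff.mpr h) hcos (Real.cos_le_one y)
      nlinarith
  have hbound : 2 * x - 2 ≤ Real.exp x * (x * Real.cos y + y * Real.sin y) := by
    nlinarith [mul_nonneg (Real.exp_pos x).le hysin]
  calc 2 ≤ (conj ζ * w).re := by rw [hre]; linarith
    _ ≤ ‖conj ζ * w‖ := re_le_norm _
    _ = ‖w‖ := by rw [norm_mul, norm_conj, hζ, one_mul]

theorem exists_log_of_ne_zero_on_ball {p : ℂ → ℂ} {c : ℂ} {r : ℝ}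
    (hp : DifferentiableOn ℂ p (ball c r)) (hpne : ∀ z ∈ ball c r, p z ≠ 0) :
    ∃ g : ℂ → ℂ, g c = log (p c) ∧
      ∀ z ∈ ball c r, HasDerivAt g (deriv p z / p z) z ∧ exp (g z) = p z := by
  obtain ⟨g, hgc, hg⟩ := (((hp.deriv isOpen_ball).div hp hpne).isExactOn_ball).with_val_at c
    (log (p c))
  refine ⟨g, hgc, fun z hz => ⟨hg z hz, ?_⟩⟩
  have hgd : DifferentiableOn ℂ (exp ∘ g) (ball c r) := fun z hz =>
    ((hg z hz).differentiableAt.cexp).differentiableWithinAt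
  have hlog : EqOn (logDeriv (exp ∘ g)) (logDeriv p) (ball c r) := fun z hz => by
    rw [logDeriv_comp differentiableAt_exp (hg z hz).differentiableAt, logDeriv_exp,
      (hg z hz).deriv, Pi.one_apply, one_mul, logDeriv_apply, Pi.div_apply]
  obtain ⟨a, -, ha⟩ := (logDeriv_eqOn_iff hgd hp isOpen_ball (convex_ball c r).isPreconnected
    hpne fun z _ => exp_ne_zero _).mp hlog
  have hc : c ∈ ball c r := mem_ball_self (pos_of_mem_ball hz)
  have ha1 : a = 1 := by
    have := ha hc
    simp only [Function.comp_apply, hgc, exp_log (hpne c hc), Pi.smul_apply, smul_eq_mul] at this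
    exact (mul_eq_right₀ (hpne c hc)).mp this.symm
  simpa [ha1] using ha hz

theorem exists_norm_eq_one_isMaxOn_closedBall {E F : Type*} [NormedAddCommGroup E]
    [NormedSpace ℝ E] [ProperSpace E] [NormedAddCommGroup F] {g : E → F} {R : ℝ}
    (hg : ContinuousOn g (ball 0 R)) (hg0 : ‖g 0‖ < 1) {z₁ : E} (hz₁ : z₁ ∈ ball 0 R)
    (hgz₁ : 1 ≤ ‖g z₁‖) :
    ∃ z₀ ∈ ball 0 R, ‖g z₀‖ = 1 ∧ IsMaxOn (‖g ·‖) (closedBall 0 ‖z₀‖) z₀ := by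
  have hsub : closedBall (0 : E) ‖z₁‖ ⊆ ball 0 R :=
    closedBall_subset_ball (mem_ball_zero_iff.mp hz₁)
  set K := closedBall (0 : E) ‖z₁‖ ∩ (‖g ·‖) ⁻¹' Ici 1
  have hK : IsCompact K := (isCompact_closedBall 0 ‖z₁‖).of_isClosed_subset
    ((hg.mono hsub).norm.preimage_isClosed_of_isClosed isClosed_closedBall isClosed_Ici)
    inter_subset_left
  obtain ⟨z₀, ⟨hz₀, hgz₀⟩, hmin⟩ :=
    hK.exists_isMinOn ⟨z₁, by simp, hgz₁⟩ continuous_norm.continuousOn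
  have hz₀R : z₀ ∈ ball 0 R := hsub hz₀
  have hz₀ne : ‖z₀‖ ≠ 0 := by
    rintro h
    rw [norm_eq_zero.mp h] at hgz₀
    exact (lt_of_lt_of_le hg0 hgz₀).false
  have hinner : MapsTo g (ball (0 : E) ‖z₀‖) (closedBall 0 1) := fun z hz => by
    by_contra h
    have hzK : z ∈ K := ⟨closedBall_subset_closedBall (mem_closedBall_zero_iff.mp hz₀)
      (ball_subset_closedBall hz), le_of_lt (not_le.mp (by simpa using h))⟩
    exact (mem_ball_zero_iff.mp hz).not_ge (hmin hzK)
  have hclosed : ∀ z ∈ closedBall (0 : E) ‖z₀‖, ‖g z‖ ≤ 1 := by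
    have hcont : ContinuousOn g (closure (ball 0 ‖z₀‖)) := hg.mono <| by
      rw [closure_ball 0 hz₀ne]
      exact (closedBall_subset_closedBall (mem_closedBall_zero_iff.mp hz₀)).trans hsub
    rw [← closure_ball 0 hz₀ne]
    intro z hz
    exact mem_closedBall_zero_iff.mp <| closure_minimal (image_subset_iff.mpr hinner)
      isClosed_closedBall (hcont.image_closure (mem_image_of_mem g hz))
  have h1 : ‖g z₀‖ = 1 := le_antisymm (hclosed z₀ (by simp)) hgz₀
  exact ⟨z₀, hz₀R, h1, fun z hz => (hclosed z hz).trans h1.ge⟩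

theorem one_le_re_of_mapsTo_ball_of_hasDerivAt_one {ψ : ℂ → ℂ} {κ : ℂ}
    (hd : DifferentiableOn ℂ ψ (ball 0 1)) (hmaps : MapsTo ψ (ball 0 1) (closedBall 0 1))
    (h0 : ψ 0 = 0) (h1 : ψ 1 = 1) (hκ : HasDerivAt ψ κ 1) : 1 ≤ κ.re := by
  have hmax : IsMaxOn (fun t : ℝ => (ψ t).re - t) (Icc 0 1) 1 := fun t ht => by
    rcases ht.2.eq_or_lt with rfl | ht1
    · simp
    · have : ‖ψ t‖ ≤ ‖(t : ℂ)‖ := norm_le_norm_of_mapsTo_ball hd hmaps h0 (by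
        rw [norm_real, Real.norm_of_nonneg ht.1]; exact ht1)
      rw [norm_real, Real.norm_of_nonneg ht.1] at this
      simp only [ofReal_one, h1, one_re, sub_self, sub_nonpos]
      exact (re_le_norm _).trans this
  have hderiv : HasDerivAt (fun t : ℝ => (ψ t).re - t) (κ.re - 1) 1 :=
    (HasDerivAt.real_of_complex (by simpa using hκ)).sub (hasDerivAt_id 1)
  have := hmax.localize.hasFDerivWithinAt_nonpos hderiv.hasDerivWithinAt.hasFDerivWithinAt
    (y := -1) (mem_posTangentConeAt_of_segment_subset (by simp [segment_symm, segment_eq_Icc]))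
  simpa using this

theorem im_eq_zero_of_norm_le_one_of_hasDerivAt_one {ψ : ℂ → ℂ} {κ : ℂ}
    (hle : ∀ u, ‖u‖ = 1 → ‖ψ u‖ ≤ 1) (h1 : ψ 1 = 1) (hκ : HasDerivAt ψ κ 1) : κ.im = 0 := by
  have hmax : IsLocalMax (fun θ : ℝ => (ψ (exp (θ * I))).re) 0 :=
    Filter.Eventually.of_forall fun θ => by
      simpa [h1] using (re_le_norm _).trans (hle _ (by simp [norm_exp_ofReal_mul_I]))
  have hderiv : HasDerivAt (fun θ : ℝ => (ψ (exp (θ * I))).re) (-κ.im) 0 := by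
    have : HasDerivAt (fun w : ℂ => ψ (exp (w * I))) (κ * I) (0 : ℝ) := by
      simpa [Function.comp_def] using
        hκ.comp_of_eq (0 : ℂ) ((hasDerivAt_id _).mul_const I).cexp (by simp)
    simpa using this.real_of_complex
  simpa using hmax.hasDerivAt_eq_zero hderiv

theorem exists_one_le_mul_deriv_eq_of_isMaxOn {g : ℂ → ℂ} {R : ℝ}
    (hg : DifferentiableOn ℂ g (ball 0 R)) (hg0 : g 0 = 0) {z₀ : ℂ} (hz₀ : z₀ ∈ ball 0 R)
    (hmax : IsMaxOn (‖g ·‖) (closedBall 0 ‖z₀‖) z₀) (hne : g z₀ ≠ 0) :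
    ∃ k : ℝ, 1 ≤ k ∧ z₀ * deriv g z₀ = k * g z₀ := by
  set ψ : ℂ → ℂ := fun u => g (u * z₀) / g z₀
  have hmem (u : ℂ) (hu : ‖u‖ ≤ 1) : ‖u * z₀‖ ≤ ‖z₀‖ := by
    simpa [norm_mul] using mul_le_of_le_one_left (norm_nonneg z₀) hu
  have hψd (u : ℂ) (hu : ‖u‖ ≤ 1) : HasDerivAt ψ (deriv g (u * z₀) * z₀ / g z₀) u := by
    have hgu : DifferentiableAt ℂ g (u * z₀) := hg.differentiableAt (isOpen_ball.mem_nhds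
      (mem_ball_zero_iff.mpr ((hmem u hu).trans_lt (mem_ball_zero_iff.mp hz₀))))
    exact (hgu.hasDerivAt.comp u ((hasDerivAt_id u).mul_const z₀)).div_const _ |>.congr_deriv
      (by simp)
  have hψle (u : ℂ) (hu : ‖u‖ ≤ 1) : ‖ψ u‖ ≤ 1 := by
    rw [norm_div, div_le_one (norm_pos_iff.mpr hne)]
    exact hmax (mem_closedBall_zero_iff.mpr (hmem u hu))
  have h1 : ψ 1 = 1 := by simp [ψ, hne]
  set κ := deriv g z₀ * z₀ / g z₀
  have hκ : HasDerivAt ψ κ 1 := by simpa using hψd 1 (by simp)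
  have hre : 1 ≤ κ.re := one_le_re_of_mapsTo_ball_of_hasDerivAt_one
    (fun u hu => (hψd u (mem_ball_zero_iff.mp hu).le).differentiableAt.differentiableWithinAt)
    (fun u hu => mem_closedBall_zero_iff.mpr (hψle u (mem_ball_zero_iff.mp hu).le))
    (by simp [ψ, hg0]) h1 hκ
  have him : κ.im = 0 := im_eq_zero_of_norm_le_one_of_hasDerivAt_one
    (fun u hu => hψle u hu.le) h1 hκ
  refine ⟨κ.re, hre, ?_⟩
  rw [show (κ.re : ℂ) = κ from ext (ofReal_re _) (by simp [him])]
  simp only [κ, div_mul_cancel₀ _ hne, mul_comm]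

theorem stmt_4 (β : ℝ)
    (hβ : (Real.exp 1 + 2 - Real.sqrt 2 * (Real.exp 1 - 1)) / (Real.sqrt 2 - 1) ≤ β)
    (p : ℂ → ℂ) (hp : DifferentiableOn ℂ p unitDisk) (hp0 : p 0 = 1)
    (hpne : ∀ z ∈ unitDisk, p z ≠ 0)
    (hsub : Subord (fun z => p z + (β : ℂ) * z * deriv p z / p z)
      (fun z => (2 + 2 * z) / (2 - z))) :
    Subord p Complex.exp := by
  obtain ⟨g, hg0, hg⟩ := exists_log_of_ne_zero_on_ball hp hpne
  rw [hp0, log_one] at hg0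
  have hgd : DifferentiableOn ℂ g unitDisk := fun z hz =>
    (hg z hz).1.differentiableAt.differentiableWithinAt
  refine ⟨g, hgd, hg0, fun z₁ hz₁ => ?_, fun z hz => (hg z hz).2.symm⟩
  by_contra! hgz₁
  obtain ⟨z₀, hz₀, hgz₀, hmax⟩ :=
    exists_norm_eq_one_isMaxOn_closedBall hgd.continuousOn (by simp [hg0]) hz₁ hgz₁
  obtain ⟨k, hk, hkz₀⟩ := exists_one_le_mul_deriv_eq_of_isMaxOn hgd hg0 hz₀ hmax
    (norm_ne_zero_iff.mp (by rw [hgz₀]; exact one_ne_zero))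
  have hval : p z₀ + β * z₀ * deriv p z₀ / p z₀ = exp (g z₀) + ((β * k : ℝ) : ℂ) * g z₀ := by
    rw [(hg z₀ hz₀).2, mul_div_assoc, mul_assoc, ← (hg z₀ hz₀).1.deriv, hkz₀]
    push_cast; ring
  obtain ⟨w, -, -, hw, hpw⟩ := hsub
  have hlt : ‖p z₀ + β * z₀ * deriv p z₀ / p z₀ - 2‖ < 2 := by
    rw [show p z₀ + β * z₀ * deriv p z₀ / p z₀ = _ from hpw z₀ hz₀]
    exact norm_mobius_sub_two_lt_two (hw z₀ hz₀)
  rw [hval] at hlt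
  exact (two_le_norm_exp_add_mul_sub_two hgz₀ (by nlinarith [four_le_critical_beta])).not_gt hlt
end
end

section
/- Let n be a positive integer and let β be a real number with β ≥ e^(n+1) + e^n when n is odd and β ≥ e^(n+1) − e^n when n is even. If p ∈ H₁ and the function z ↦ 1 + β·(z·p′(z))^n is subordinate to z ↦ e^z on 𝔻, then p is subordinate to z ↦ e^z on 𝔻. -/
/-!
Since `‖exp w - 1‖ ≤ 2‖w‖` for `‖w‖ ≤ 1`, the subordination gives `β ‖z p'(z)‖ⁿ < 2`, and
the lower bound `β ≥ eⁿ (e - 1)` (together with `e (e - 1) > 4`) forces `‖z p'(z)‖ < 1/2` on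
the disk. The Schwarz lemma applied to `z ↦ z p'(z)` upgrades this to `‖p'‖ ≤ 1/2`, hence
`‖p - 1‖ ≤ 1/2`, and then `w = log p` is a Schwarz function with `‖w‖ ≤ (3/2) ‖p - 1‖ < 1`
and `p = exp ∘ w`.
-/

open Complex

noncomputable section

open Metric

theorem Subord.norm_sub_one_lt_two {f : ℂ → ℂ} (h : Subord f exp) {z : ℂ}
    (hz : z ∈ unitDisk) : ‖f z - 1‖ < 2 := by
  obtain ⟨w, -, -, hw1, hfw⟩ := h
  rw [hfw z hz]
  calc ‖exp (w z) - 1‖ ≤ 2 * ‖w z‖ := norm_exp_sub_one_le (hw1 z hz).le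
    _ < 2 := by linarith [hw1 z hz]

theorem norm_lt_half_of_norm_mul_pow_lt_two {n : ℕ} (hn : n ≠ 0) {β : ℝ}
    (hβ : Real.exp (n + 1) - Real.exp n ≤ β) {w : ℂ} (h : ‖(β : ℂ) * w ^ n‖ < 2) :
    ‖w‖ < 1 / 2 := by
  have he : 2.7182818283 < Real.exp 1 := Real.exp_one_gt_d9
  have hβ' : Real.exp 1 ^ n * (Real.exp 1 - 1) ≤ β := by
    rwa [Real.exp_add, ← Real.exp_one_pow, ← mul_sub_one] at hβ
  have hβ0 : 0 ≤ β := le_trans (by have := pow_pos (Real.exp_pos 1) n; nlinarith) hβ'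
  rw [norm_mul, norm_pow, norm_real, Real.norm_of_nonneg hβ0] at h
  by_contra! hw
  have hpow : Real.exp 1 / 2 ≤ (Real.exp 1 / 2) ^ n := le_self_pow₀ (by linarith) hn
  have : 2 < β * ‖w‖ ^ n :=
    calc 2 < Real.exp 1 / 2 * (Real.exp 1 - 1) := by nlinarith
      _ ≤ (Real.exp 1 / 2) ^ n * (Real.exp 1 - 1) := by gcongr; linarith
      _ = Real.exp 1 ^ n * (Real.exp 1 - 1) * (1 / 2) ^ n := by ring
      _ ≤ β * ‖w‖ ^ n := by gcongr
  linarith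

theorem dslope_id_mul_zero {f : ℂ → ℂ} (hf : DifferentiableAt ℂ f 0) :
    dslope (fun z => z * f z) 0 = f := by
  ext z
  rcases eq_or_ne z 0 with rfl | hz
  · rw [dslope_same]
    simpa using ((hasDerivAt_id' 0).fun_mul hf.hasDerivAt).deriv
  · rw [dslope_of_ne _ hz, slope_def_field]
    field_simp
    ring

/-- The Schwarz lemma for `z ↦ z f z`, whose `dslope` at `0` is `f`. -/
theorem norm_le_div_of_norm_id_mul_le {f : ℂ → ℂ} {R c : ℝ}
    (hf : DifferentiableOn ℂ f (ball 0 R)) (h : ∀ z ∈ ball (0 : ℂ) R, ‖z * f z‖ ≤ c)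
    {z : ℂ} (hz : z ∈ ball 0 R) :
    ‖f z‖ ≤ c / R := by
  have hR : 0 < R := pos_of_mem_ball hz
  have hf0 : DifferentiableAt ℂ f 0 := hf.differentiableAt (ball_mem_nhds 0 hR)
  rw [← dslope_id_mul_zero hf0]
  refine norm_dslope_le_div_of_mapsTo_ball (differentiableOn_id.mul hf) (fun w hw => ?_) hz
  simpa using h w hw

theorem subord_exp_of_norm_sub_one_le_half {p : ℂ → ℂ} (hp : DifferentiableOn ℂ p unitDisk)
    (hp0 : p 0 = 1) (h : ∀ z ∈ unitDisk, ‖p z - 1‖ ≤ 1 / 2) : Subord p exp := by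
  have hslit : ∀ z ∈ unitDisk, p z ∈ slitPlane := fun z hz => by
    have := (abs_re_le_norm (p z - 1)).trans (h z hz)
    rw [sub_re, one_re, abs_le] at this
    exact mem_slitPlane_iff.mpr (Or.inl (by linarith))
  refine ⟨fun z => log (p z), hp.clog hslit, by simp [hp0], fun z hz => ?_,
    fun z hz => (exp_log (slitPlane_ne_zero (hslit z hz))).symm⟩
  calc ‖log (p z)‖ = ‖log (1 + (p z - 1))‖ := by rw [add_sub_cancel]
    _ ≤ 3 / 2 * ‖p z - 1‖ := norm_log_one_add_half_le_self (h z hz)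
    _ < 1 := by linarith [h z hz]

theorem stmt_5 (n : ℕ) (hn : 0 < n) (β : ℝ)
    (hβodd : Odd n → Real.exp ((n : ℝ) + 1) + Real.exp (n : ℝ) ≤ β)
    (hβeven : Even n → Real.exp ((n : ℝ) + 1) - Real.exp (n : ℝ) ≤ β)
    (p : ℂ → ℂ) (hp : DifferentiableOn ℂ p unitDisk) (hp0 : p 0 = 1)
    (hsub : Subord (fun z => 1 + (β : ℂ) * (z * deriv p z) ^ n) Complex.exp) :
    Subord p Complex.exp := by
  have hβ : Real.exp (n + 1) - Real.exp n ≤ β := by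
    rcases Nat.even_or_odd n with h | h
    · exact hβeven h
    · linarith [hβodd h, Real.exp_pos n]
  have hzp : ∀ z ∈ unitDisk, ‖z * deriv p z‖ ≤ 1 / 2 := fun z hz =>
    (norm_lt_half_of_norm_mul_pow_lt_two hn.ne' hβ (by simpa using hsub.norm_sub_one_lt_two hz)).le
  have hp' : ∀ z ∈ unitDisk, ‖deriv p z‖ ≤ 1 / 2 := fun z hz => by
    simpa using norm_le_div_of_norm_id_mul_le
      ((hp.analyticOnNhd isOpen_ball).deriv.differentiableOn) hzp hz
  refine subord_exp_of_norm_sub_one_le_half hp hp0 fun z hz => ?_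
  have hz1 : ‖z‖ < 1 := mem_ball_zero_iff.mp hz
  calc ‖p z - 1‖ ≤ 1 / 2 * ‖z - 0‖ := by
        rw [← hp0]
        exact (convex_ball 0 1).norm_image_sub_le_of_norm_deriv_le
          (fun x hx => hp.differentiableAt (isOpen_ball.mem_nhds hx)) hp'
          (mem_ball_self one_pos) hz
    _ ≤ 1 / 2 := by rw [sub_zero]; linarith
end
end

section
/- Let n be a non-negative integer and let β be a real number with β ≥ e^(n+1) − e^n. If p ∈ H₁, p(z) ≠ 0 for all z ∈ 𝔻, and the function z ↦ 1 + β·z·p′(z)/p(z)^(n+1) is subordinate to z ↦ e^z on 𝔻, then p is subordinate to z ↦ e^z on 𝔻. -/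
open Complex

noncomputable section

open Metric Set

lemma norm_exp_sub_one_le' (z : ℂ) : ‖Complex.exp z - 1‖ ≤ Real.exp ‖z‖ - 1 := by
  have h1 : HasSum (fun n : ℕ => ((n.factorial : ℂ))⁻¹ • z ^ n) (Complex.exp z) := by
    rw [Complex.exp_eq_exp_ℂ]
    exact NormedSpace.exp_series_hasSum_exp' z
  have h2 : HasSum (fun n : ℕ => ((n.factorial : ℝ))⁻¹ • ‖z‖ ^ n) (Real.exp ‖z‖) := by
    rw [Real.exp_eq_exp_ℝ]
    exact NormedSpace.exp_series_hasSum_exp' ‖z‖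
  have hA : HasSum (fun n : ℕ => (((n+1).factorial : ℂ))⁻¹ • z ^ (n+1)) (Complex.exp z - 1) := by
    have := (hasSum_nat_add_iff' 1).mpr h1
    simpa using this
  have hB : HasSum (fun n : ℕ => (((n+1).factorial : ℝ))⁻¹ • ‖z‖ ^ (n+1)) (Real.exp ‖z‖ - 1) := by
    have := (hasSum_nat_add_iff' 1).mpr h2
    simpa using this
  have hnorm : (fun n : ℕ => ‖(((n+1).factorial : ℂ))⁻¹ • z ^ (n+1)‖)
      = fun n : ℕ => (((n+1).factorial : ℝ))⁻¹ • ‖z‖ ^ (n+1) := by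
    funext n
    simp [norm_smul, Complex.norm_natCast, norm_pow]
  calc ‖Complex.exp z - 1‖ = ‖∑' n : ℕ, (((n+1).factorial : ℂ))⁻¹ • z ^ (n+1)‖ := by rw [hA.tsum_eq]
    _ ≤ ∑' n : ℕ, ‖(((n+1).factorial : ℂ))⁻¹ • z ^ (n+1)‖ := by
        apply norm_tsum_le_tsum_norm
        rw [hnorm]; exact hB.summable
    _ = Real.exp ‖z‖ - 1 := by rw [hnorm, hB.tsum_eq]

lemma exists_primitive {g : ℂ → ℂ} (hg : DifferentiableOn ℂ g unitDisk) :
    ∃ w : ℂ → ℂ, w 0 = 0 ∧ ∀ z ∈ unitDisk, HasDerivAt w (g z) z := by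
  set a : ℕ → ℂ := fun n => ((n.factorial : ℂ))⁻¹ * iteratedDeriv n g 0 with ha
  have hsum : ∀ z ∈ unitDisk, HasSum (fun n => a n * z ^ n) (g z) := by
    intro z hz
    have := Complex.hasSum_taylorSeries_on_ball hg (by simpa [unitDisk] using hz)
    convert this using 2 with n
    · rfl
    simp only [ha, smul_eq_mul, sub_zero]
    ring
  refine ⟨fun z => ∑' n : ℕ, (a n / (n + 1)) * z ^ (n + 1), by simp, ?_⟩
  intro z hz
  have hz1 : ‖z‖ < 1 := by simpa [unitDisk] using hz
  obtain ⟨r, hzr, hr1⟩ := exists_between hz1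
  obtain ⟨r', hrr', hr'1⟩ := exists_between hr1
  have hr0 : 0 ≤ r := (norm_nonneg z).trans hzr.le
  have hr'0 : 0 < r' := lt_of_le_of_lt hr0 hrr'
  have hsr' : HasSum (fun n => a n * (r' : ℂ) ^ n) (g r') := by
    apply hsum
    simp only [unitDisk, mem_ball, dist_zero_right, Complex.norm_real, Real.norm_eq_abs]
    rwa [abs_of_pos hr'0]
  obtain ⟨C, hC⟩ := (hsr'.summable.tendsto_atTop_zero.norm.bddAbove_range)
  have hC' : ∀ n : ℕ, ‖a n‖ * r' ^ n ≤ C := by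
    intro n
    have : ‖a n * (r' : ℂ) ^ n‖ ≤ C := hC ⟨n, rfl⟩
    simpa [norm_mul, norm_pow, Complex.norm_real, abs_of_pos hr'0] using this
  have hC0 : 0 ≤ C := le_trans (by positivity) (hC' 0)
  have hq1 : r / r' < 1 := (div_lt_one hr'0).2 hrr'
  have hq0 : 0 ≤ r / r' := div_nonneg hr0 hr'0.le
  have hu : Summable (fun n : ℕ => C * (r / r') ^ n) :=
    (summable_geometric_of_lt_one hq0 hq1).mul_left C
  have key := hasDerivAt_tsum_of_isPreconnected hu (Metric.isOpen_ball (x := (0:ℂ)) (ε := r))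
    ((convex_ball (0:ℂ) r).isPreconnected)
    (g := fun n y => (a n / (n + 1)) * y ^ (n + 1))
    (g' := fun n y => a n * y ^ n)
    (fun n y _ => by
      have h1 : HasDerivAt (fun y : ℂ => y ^ (n + 1)) (((n:ℂ) + 1) * y ^ n) y := by
        simpa using hasDerivAt_pow (n + 1) y
      have := h1.const_mul (a n / ((n:ℂ) + 1))
      convert this using 1
      · rfl
      have hne : ((n : ℂ) + 1) ≠ 0 := Nat.cast_add_one_ne_zero n
      field_simp)
    (fun n y hy => by
      have hyr : ‖y‖ < r := by simpa using hy
      calc ‖a n * y ^ n‖ = ‖a n‖ * ‖y‖ ^ n := by simp [norm_mul, norm_pow]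
        _ ≤ ‖a n‖ * r ^ n := by
            apply mul_le_mul_of_nonneg_left (pow_le_pow_left₀ (norm_nonneg y) hyr.le n)
              (norm_nonneg _)
        _ = (‖a n‖ * r' ^ n) * (r / r') ^ n := by
            rw [mul_assoc, ← mul_pow]
            congr 2
            field_simp
        _ ≤ C * (r / r') ^ n := by
            apply mul_le_mul_of_nonneg_right (hC' n) (by positivity))
    (Metric.mem_ball_self (lt_of_le_of_lt (norm_nonneg z) hzr))
    (by simpa using summable_zero)
    (by simpa using hzr)
  have : (∑' n : ℕ, a n * z ^ n) = g z := (hsum z hz).tsum_eq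
  rwa [this] at key

lemma exists_log {p : ℂ → ℂ} (hp : DifferentiableOn ℂ p unitDisk) (hp0 : p 0 = 1)
    (hpne : ∀ z ∈ unitDisk, p z ≠ 0) :
    ∃ w : ℂ → ℂ, w 0 = 0 ∧ (∀ z ∈ unitDisk, HasDerivAt w (deriv p z / p z) z) ∧
      ∀ z ∈ unitDisk, p z = Complex.exp (w z) := by
  have hopen : IsOpen unitDisk := Metric.isOpen_ball
  have hderiv : DifferentiableOn ℂ (deriv p) unitDisk :=
    ((hp.analyticOnNhd hopen).deriv).differentiableOn
  have hg : DifferentiableOn ℂ (fun z => deriv p z / p z) unitDisk := hderiv.div hp hpne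
  obtain ⟨w, hw0, hwd⟩ := exists_primitive hg
  refine ⟨w, hw0, hwd, ?_⟩
  have hF : ∀ z ∈ unitDisk, HasDerivAt (fun z => p z * Complex.exp (-w z)) 0 z := by
    intro z hz
    have hpz : HasDerivAt p (deriv p z) z := (hp.differentiableAt (hopen.mem_nhds hz)).hasDerivAt
    have hE : HasDerivAt (fun z => Complex.exp (-w z))
        (Complex.exp (-w z) * -(deriv p z / p z)) z := ((hwd z hz).neg).cexp
    have := hpz.mul hE
    refine HasDerivAt.congr_deriv this ?_
    field_simp [hpne z hz]
    ring
  have hconst : ∀ z ∈ unitDisk, p z * Complex.exp (-w z) = 1 := by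
    intro z hz
    have hdiff : DifferentiableOn ℂ (fun z => p z * Complex.exp (-w z)) unitDisk :=
      fun x hx => ((hF x hx).differentiableAt).differentiableWithinAt
    have hzero : ∀ x ∈ unitDisk, fderivWithin ℂ (fun z => p z * Complex.exp (-w z)) unitDisk x = 0 := by
      intro x hx
      rw [fderivWithin_of_isOpen hopen hx]
      have := (hF x hx).hasFDerivAt.fderiv
      rw [this]
      ext y
      simp
    have h0 : (0:ℂ) ∈ unitDisk := by simp [unitDisk]
    have := (convex_ball (0:ℂ) 1).is_const_of_fderivWithin_eq_zero hdiff hzero hz h0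
    simpa [hp0, hw0] using this
  intro z hz
  have h := hconst z hz
  have : p z = (Complex.exp (-w z))⁻¹ := by
    field_simp at h ⊢
    linear_combination h
  rw [this, ← Complex.exp_neg, neg_neg]

theorem stmt_6 (n : ℕ) (β : ℝ)
    (hβ : Real.exp ((n : ℝ) + 1) - Real.exp (n : ℝ) ≤ β)
    (p : ℂ → ℂ) (hp : DifferentiableOn ℂ p unitDisk) (hp0 : p 0 = 1)
    (hpne : ∀ z ∈ unitDisk, p z ≠ 0)
    (hsub : Subord (fun z => 1 + (β : ℂ) * z * deriv p z / (p z) ^ (n + 1))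
      Complex.exp) :
    Subord p Complex.exp := by
  obtain ⟨w, hw0, hwd, hwexp⟩ := exists_log hp hp0 hpne
  have hopen : IsOpen unitDisk := Metric.isOpen_ball
  have hwdiff : DifferentiableOn ℂ w unitDisk :=
    fun z hz => ((hwd z hz).differentiableAt).differentiableWithinAt
  refine ⟨w, hwdiff, hw0, ?_, fun z hz => hwexp z hz⟩
  by_contra hcon
  push_neg at hcon
  obtain ⟨z₁, hz₁, hz₁w⟩ := hcon
  have hz₁1 : ‖z₁‖ < 1 := by simpa [unitDisk] using hz₁
  set K : Set ℂ := Metric.closedBall 0 ‖z₁‖ ∩ (fun z => ‖w z‖) ⁻¹' Set.Ici 1 with hKdef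
  have hsubset : Metric.closedBall (0:ℂ) ‖z₁‖ ⊆ unitDisk := by
    intro x hx
    simp only [Metric.mem_closedBall, dist_zero_right] at hx
    simp only [unitDisk, Metric.mem_ball, dist_zero_right]
    linarith
  have hwcont : ContinuousOn (fun z => ‖w z‖) (Metric.closedBall 0 ‖z₁‖) :=
    ((hwdiff.continuousOn).mono hsubset).norm
  have hKclosed : IsClosed K :=
    hwcont.preimage_isClosed_of_isClosed Metric.isClosed_closedBall isClosed_Ici
  have hKcompact : IsCompact K :=
    (isCompact_closedBall (0:ℂ) ‖z₁‖).of_isClosed_subset hKclosed inter_subset_left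
  have hz₁K : z₁ ∈ K := by
    refine ⟨by simp, hz₁w⟩
  obtain ⟨z₀, hz₀K, hz₀min⟩ := hKcompact.exists_isMinOn ⟨z₁, hz₁K⟩ continuous_norm.continuousOn
  obtain ⟨hz₀ball, hz₀w⟩ := hz₀K
  simp only [Metric.mem_closedBall, dist_zero_right] at hz₀ball
  simp only [mem_preimage, mem_Ici] at hz₀w
  have hr₀pos : 0 < ‖z₀‖ := by
    rcases eq_or_ne z₀ 0 with h | h
    · exfalso; rw [h, hw0] at hz₀w; simp at hz₀w; linarith
    · exact norm_pos_iff.mpr h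
  have hr₀lt1 : ‖z₀‖ < 1 := lt_of_le_of_lt hz₀ball hz₁1
  have hz₀disk : z₀ ∈ unitDisk := by
    simp only [unitDisk, Metric.mem_ball, dist_zero_right]; exact hr₀lt1
  -- inside ball of radius ‖z₀‖, ‖w‖ < 1
  have hsmall : ∀ x ∈ Metric.ball (0:ℂ) ‖z₀‖, ‖w x‖ < 1 := by
    intro x hx
    simp only [Metric.mem_ball, dist_zero_right] at hx
    by_contra hge
    push_neg at hge
    have hxK : x ∈ K := ⟨by simp only [Metric.mem_closedBall, dist_zero_right]; linarith, hge⟩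
    have := hz₀min hxK
    simp only at this
    exact absurd this (by simpa using not_le.mpr hx)
  -- Schwarz
  have hsch : ∀ x ∈ Metric.ball (0:ℂ) ‖z₀‖, ‖w x‖ ≤ 1 / ‖z₀‖ * ‖x‖ := by
    intro x hx
    have hmaps : Set.MapsTo w (Metric.ball 0 ‖z₀‖) (Metric.ball (w 0) 1) := by
      intro y hy
      rw [hw0]
      simpa [Metric.mem_ball, dist_zero_right] using hsmall y hy
    have hdb : DifferentiableOn ℂ w (Metric.ball 0 ‖z₀‖) :=
      hwdiff.mono (Metric.ball_subset_ball hr₀lt1.le)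
    have := Complex.dist_le_div_mul_dist_of_mapsTo_ball hdb (fun y hy => Metric.ball_subset_closedBall (hmaps hy)) hx
    simpa [hw0, dist_zero_right] using this
  -- the radial function
  set D : ℂ := deriv p z₀ / p z₀ * z₀ with hDdef
  have hD : HasDerivAt (fun t : ℝ => w ((t:ℂ) * z₀)) D 1 := by
    have h1 : HasDerivAt (fun ζ : ℂ => w (ζ * z₀)) D 1 := by
      have hinner : HasDerivAt (fun ζ : ℂ => ζ * z₀) z₀ 1 := by
        simpa using (hasDerivAt_id (1:ℂ)).mul_const z₀
      have hw' : HasDerivAt w (deriv p z₀ / p z₀) ((1:ℂ) * z₀) := by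
        rw [one_mul]; exact hwd z₀ hz₀disk
      have := hw'.comp (1:ℂ) hinner
      exact this
    exact h1.comp_ofReal
  have hht : ∀ t : ℝ, t ∈ Set.Ioo (0:ℝ) 1 → ‖w ((t:ℂ) * z₀)‖ ≤ t := by
    intro t ht
    have hmem : (t:ℂ) * z₀ ∈ Metric.ball (0:ℂ) ‖z₀‖ := by
      simp only [Metric.mem_ball, dist_zero_right, norm_mul, Complex.norm_real,
        Real.norm_eq_abs, abs_of_pos ht.1]
      nlinarith [ht.2, hr₀pos]
    have := hsch _ hmem
    rw [norm_mul, Complex.norm_real, Real.norm_eq_abs, abs_of_pos ht.1] at this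
    have h0 : ‖z₀‖ ≠ 0 := hr₀pos.ne'
    calc ‖w ((t:ℂ) * z₀)‖ ≤ 1 / ‖z₀‖ * (t * ‖z₀‖) := this
      _ = t := by
          rw [one_div, inv_mul_eq_div, mul_div_assoc, div_self h0, mul_one]
  have hIoo : Set.Ioo (0:ℝ) 1 ∈ nhdsWithin (1:ℝ) (Set.Iio 1) :=
    Ioo_mem_nhdsLT_of_mem (by constructor <;> norm_num)
  -- ‖w z₀‖ ≤ 1
  have hwz₀le : ‖w z₀‖ ≤ 1 := by
    have hT : Filter.Tendsto (fun t : ℝ => ‖w ((t:ℂ) * z₀)‖) (nhdsWithin (1:ℝ) (Set.Iio 1))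
        (nhds ‖w (((1:ℝ):ℂ) * z₀)‖) :=
      ((hD.continuousAt.norm).tendsto).mono_left nhdsWithin_le_nhds
    have : ‖w (((1:ℝ):ℂ) * z₀)‖ ≤ 1 := by
      refine le_of_tendsto hT ?_
      filter_upwards [hIoo] with t ht
      exact (hht t ht).trans ht.2.le
    simpa using this
  have hwz₀ge : (1:ℝ) ≤ ‖w z₀‖ := hz₀w
  -- ‖D‖ ≥ 1
  have hD1 : 1 ≤ ‖D‖ := by
    have hslope := hasDerivAt_iff_tendsto_slope.mp hD
    have hmono : nhdsWithin (1:ℝ) (Set.Iio 1) ≤ nhdsWithin 1 {(1:ℝ)}ᶜ :=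
      nhdsWithin_mono 1 (fun x hx => ne_of_lt hx)
    have htend : Filter.Tendsto (fun t : ℝ => ‖slope (fun t : ℝ => w ((t:ℂ) * z₀)) 1 t‖)
        (nhdsWithin 1 (Set.Iio 1)) (nhds ‖D‖) :=
      (hslope.mono_left hmono).norm
    refine ge_of_tendsto htend ?_
    filter_upwards [hIoo] with t ht
    have h1t : 0 < 1 - t := by linarith [ht.2]
    have hnum : 1 - t ≤ ‖w ((t:ℂ) * z₀) - w (((1:ℝ):ℂ) * z₀)‖ := by
      have := norm_sub_norm_le (w (((1:ℝ):ℂ) * z₀)) (w ((t:ℂ) * z₀))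
      have h1 : ‖w (((1:ℝ):ℂ) * z₀)‖ = ‖w z₀‖ := by norm_num
      have h2 := hht t ht
      rw [norm_sub_rev] at this
      calc 1 - t ≤ ‖w z₀‖ - ‖w ((t:ℂ) * z₀)‖ := by linarith [hwz₀ge, h2]
        _ ≤ ‖w ((t:ℂ) * z₀) - w (((1:ℝ):ℂ) * z₀)‖ := by rw [← h1] at *; linarith [this]
    rw [slope_def_module, norm_smul]
    simp only [norm_inv, Real.norm_eq_abs]
    rw [abs_of_neg (by linarith : t - 1 < 0), neg_sub,
      le_inv_mul_iff₀ (by linarith : (0:ℝ) < 1 - t), mul_one]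
    exact hnum
  -- final contradiction
  obtain ⟨w₁, _, _, hw₁lt, hw₁eq⟩ := hsub
  have heq := hw₁eq z₀ hz₀disk
  simp only at heq
  set W : ℂ := w z₀ with hWdef
  have hval : (β : ℂ) * z₀ * deriv p z₀ / (p z₀) ^ (n + 1)
      = (β : ℂ) * D * Complex.exp (-(n:ℂ) * W) := by
    rw [hDdef]
    rw [hwexp z₀ hz₀disk, ← hWdef]
    have hexpne : Complex.exp W ≠ 0 := Complex.exp_ne_zero W
    have hpow : Complex.exp W ^ (n + 1) = Complex.exp ((n:ℂ) * W) * Complex.exp W := by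
      rw [pow_succ, ← Complex.exp_nat_mul]
    have hexpne2 : Complex.exp ((n:ℂ) * W) ≠ 0 := Complex.exp_ne_zero _
    rw [hpow, neg_mul, Complex.exp_neg]
    field_simp
  have hkey : Complex.exp (w₁ z₀) - 1 = (β : ℂ) * D * Complex.exp (-(n:ℂ) * W) := by
    rw [← heq, hval]; ring
  have hβpos : (0:ℝ) < β := by
    have := Real.exp_lt_exp.mpr (show (n:ℝ) < (n:ℝ) + 1 by linarith)
    linarith
  have hRe : W.re ≤ 1 := (Complex.re_le_norm W).trans hwz₀le
  have hlhs : Real.exp 1 - 1 ≤ ‖(β : ℂ) * D * Complex.exp (-(n:ℂ) * W)‖ := by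
    rw [norm_mul, norm_mul, Complex.norm_real, Real.norm_eq_abs, abs_of_pos hβpos,
      Complex.norm_exp]
    have h1 : (-(n:ℂ) * W).re = -((n:ℝ) * W.re) := by simp
    rw [h1]
    have h2 : Real.exp (-((n:ℝ) * W.re)) ≥ Real.exp (-(n:ℝ)) := by
      apply Real.exp_le_exp.mpr
      have : (n:ℝ) * W.re ≤ (n:ℝ) * 1 := by
        apply mul_le_mul_of_nonneg_left hRe (Nat.cast_nonneg n)
      linarith
    have h3 : β * ‖D‖ * Real.exp (-((n:ℝ) * W.re)) ≥ β * 1 * Real.exp (-(n:ℝ)) := by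
      apply mul_le_mul (mul_le_mul le_rfl hD1 zero_le_one hβpos.le) h2 (Real.exp_pos _).le
      positivity
    have h4 : (Real.exp ((n:ℝ) + 1) - Real.exp (n:ℝ)) * Real.exp (-(n:ℝ)) = Real.exp 1 - 1 := by
      rw [sub_mul, ← Real.exp_add, ← Real.exp_add]
      norm_num
    calc Real.exp 1 - 1 = (Real.exp ((n:ℝ) + 1) - Real.exp (n:ℝ)) * Real.exp (-(n:ℝ)) := h4.symm
      _ ≤ β * Real.exp (-(n:ℝ)) := by
          apply mul_le_mul_of_nonneg_right hβ (Real.exp_pos _).le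
      _ = β * 1 * Real.exp (-(n:ℝ)) := by ring
      _ ≤ β * ‖D‖ * Real.exp (-((n:ℝ) * W.re)) := h3
  have hrhs : ‖Complex.exp (w₁ z₀) - 1‖ < Real.exp 1 - 1 := by
    have h1 := norm_exp_sub_one_le' (w₁ z₀)
    have h2 : Real.exp ‖w₁ z₀‖ < Real.exp 1 := Real.exp_lt_exp.mpr (hw₁lt z₀ hz₀disk)
    linarith
  rw [hkey] at hrhs
  linarith
end
end

section
/- Let β be a real number with β ≥ e + e⁻¹, and let p ∈ H₁ with p(z) ≠ 0 for all z ∈ 𝔻. If the function z ↦ p(z) + β·z·p′(z)/p(z) is subordinate to z ↦ e^z on 𝔻, then p is subordinate to z ↦ e^z on 𝔻. -/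
/-!
Write `p = exp ∘ q` with `q 0 = 0`, so the conclusion is that `q` maps the disk into itself.
Otherwise there is a smallest circle `|z| = |z₀|` on which `|q|` reaches `1`, and Jack's lemma
gives `z₀ q'(z₀) = m q(z₀)` with `m ≥ 1`. At `z₀` the subordinate function then takes the value
`e^u + β m u` with `|u| = 1`. Since `Re (e^u ū) ≥ -1/e` on the unit circle and `β m ≥ e + 1/e`,
this value has modulus at least `e`, whereas `exp` maps the unit disk into `|w| < e`.
-/

open Complex

noncomputable section

open Metric Set ComplexConjugate

section Elementary

open scoped Real

lemma Real.cos_le_exp_neg_mul_sq {x : ℝ} (hx : |x| ≤ π) :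
    Real.cos x ≤ Real.exp (-(2 / π ^ 2 * x ^ 2)) :=
  (Real.cos_le_one_sub_mul_cos_sq hx).trans
    (by linarith [Real.add_one_le_exp (-(2 / π ^ 2 * x ^ 2))])

lemma Real.exp_neg_cos_mul_cos_add_sin_le {φ : ℝ} (h0 : 0 ≤ φ) (hπ : φ ≤ π) :
    Real.exp (-Real.cos φ) * Real.cos (φ + Real.sin φ) ≤ Real.exp (-1) := by
  set x := φ + Real.sin φ
  rcases le_or_gt (Real.cos x) 0 with hc | hc
  · exact (mul_nonpos_of_nonneg_of_nonpos (Real.exp_pos _).le hc).trans (Real.exp_pos _).le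
  have hsin : 0 ≤ Real.sin φ := Real.sin_nonneg_of_nonneg_of_le_pi h0 hπ
  have hx : x < π / 2 := by
    by_contra! h
    have := Real.cos_nonpos_of_pi_div_two_le_of_le h
      (by linarith [Real.sin_le_one φ, Real.pi_gt_three])
    linarith
  have hsin' : 2 / π * φ ≤ Real.sin φ := Real.mul_le_sin h0 (by linarith)
  have hcos : 1 - φ ^ 2 / 2 ≤ Real.cos φ := Real.one_sub_sq_div_two_le_cos
  -- `π² ≤ 2 (π + 2)` is what makes the constant `2 / π²` of the cosine bound good enough
  have hpi : π ^ 2 ≤ 2 * (π + 2) := by nlinarith [Real.pi_lt_d2, Real.pi_gt_three]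
  have hquad : φ ^ 2 / 2 ≤ 2 / π ^ 2 * x ^ 2 := by
    have hx' : (π + 2) * φ ≤ π * x := by
      have := mul_le_mul_of_nonneg_left hsin' Real.pi_pos.le
      rw [← mul_assoc, mul_div_cancel₀ _ Real.pi_ne_zero] at this
      simp only [x, mul_add]
      linarith
    rw [div_mul_eq_mul_div, le_div_iff₀ (by positivity)]
    nlinarith [mul_le_mul hx' hx' (by positivity) (by positivity), sq_nonneg φ]
  calc Real.exp (-Real.cos φ) * Real.cos x
      ≤ Real.exp (-Real.cos φ) * Real.exp (-(2 / π ^ 2 * x ^ 2)) := by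
        gcongr
        exact Real.cos_le_exp_neg_mul_sq (abs_le.2 ⟨by linarith, by linarith⟩)
    _ ≤ Real.exp (-1) := by
        rw [← Real.exp_add]
        gcongr
        linarith

lemma Real.neg_exp_neg_one_le_exp_mul_cos_add_mul_sin {a b : ℝ} (h : a ^ 2 + b ^ 2 = 1) :
    -Real.exp (-1) ≤ Real.exp a * (a * Real.cos b + b * Real.sin b) := by
  wlog hb : 0 ≤ b generalizing b
  · simpa using this (b := -b) (by linarith) (by linarith)
  -- `(a, b) = (-cos φ, sin φ)` with `φ ∈ [0, π]`
  set φ := Real.arccos (-a)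
  have hcos : Real.cos φ = -a := Real.cos_arccos (by nlinarith) (by nlinarith)
  have hsin : Real.sin φ = b := by
    rw [Real.sin_arccos, show 1 - (-a) ^ 2 = b ^ 2 by linarith, Real.sqrt_sq hb]
  have := Real.exp_neg_cos_mul_cos_add_sin_le (Real.arccos_nonneg (-a)) (Real.arccos_le_pi (-a))
  rw [Real.cos_add, hcos, hsin, neg_neg] at this
  linarith

end Elementary

lemma neg_exp_neg_one_le_re_exp_mul_conj {u : ℂ} (hu : ‖u‖ = 1) :
    -Real.exp (-1) ≤ (exp u * conj u).re := by
  have h : u.re ^ 2 + u.im ^ 2 = 1 := by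
    have := normSq_apply u
    rw [normSq_eq_norm_sq, hu] at this
    linarith
  have hre : (exp u * conj u).re =
      Real.exp u.re * (u.re * Real.cos u.im + u.im * Real.sin u.im) := by
    simp only [mul_re, exp_re, exp_im, conj_re, conj_im]
    ring
  exact hre ▸ Real.neg_exp_neg_one_le_exp_mul_cos_add_mul_sin h

lemma exp_one_le_norm_exp_add_mul {s : ℝ} (hs : Real.exp 1 + (Real.exp 1)⁻¹ ≤ s) {u : ℂ}
    (hu : ‖u‖ = 1) : Real.exp 1 ≤ ‖exp u + s * u‖ := by
  have hu' : u * conj u = 1 := by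
    rw [mul_conj, normSq_eq_norm_sq, hu]
    norm_num
  calc Real.exp 1 ≤ (exp u * conj u).re + s := by
        linarith [neg_exp_neg_one_le_re_exp_mul_conj hu, Real.exp_neg 1]
    _ = (exp u * conj u + s).re := by simp
    _ ≤ ‖exp u * conj u + s‖ := re_le_norm _
    _ = ‖exp u + s * u‖ := by
        rw [← one_mul ‖_ + (s : ℂ)‖, ← hu, ← norm_mul]
        congr 1
        linear_combination exp u * hu'

lemma exists_eq_mul_exp_of_ne_zero_on_ball {p : ℂ → ℂ} {c : ℂ} {r : ℝ}
    (hp : DifferentiableOn ℂ p (ball c r)) (hp0 : ∀ z ∈ ball c r, p z ≠ 0) :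
    ∃ q : ℂ → ℂ, q c = 0 ∧ (∀ z ∈ ball c r, HasDerivAt q (deriv p z / p z) z) ∧
      ∀ z ∈ ball c r, p z = p c * exp (q z) := by
  have hlogDeriv : DifferentiableOn ℂ (fun z => deriv p z / p z) (ball c r) :=
    ((hp.analyticOnNhd isOpen_ball).deriv.differentiableOn).div hp hp0
  obtain ⟨q, hqc, hq⟩ := hlogDeriv.isExactOn_ball.with_val_at c 0
  refine ⟨q, hqc, hq, fun z hz => ?_⟩
  have hderiv : ∀ z ∈ ball c r, HasDerivAt (fun z => p z * exp (-q z)) 0 z := by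
    intro z hz
    refine (((hp.differentiableAt (isOpen_ball.mem_nhds hz)).hasDerivAt).mul
      (hq z hz).neg.cexp).congr_deriv ?_
    have := hp0 z hz
    field_simp
    ring
  have hconst := isOpen_ball.is_const_of_deriv_eq_zero (convex_ball c r).isPreconnected
    (fun z hz => (hderiv z hz).differentiableAt.differentiableWithinAt)
    (fun z hz => (hderiv z hz).deriv) hz (mem_ball_self (pos_of_mem_ball hz))
  simp only [hqc, neg_zero, exp_zero, mul_one] at hconst
  rw [← hconst, mul_assoc, ← exp_add, neg_add_cancel, exp_zero, mul_one]

lemma one_le_re_of_hasDerivAt_of_norm_le {g : ℂ → ℂ} {D : ℂ} (hg : HasDerivAt g D 1)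
    (h1 : g 1 = 1) (hle : ∀ t ∈ Icc (0 : ℝ) 1, ‖g t‖ ≤ t) : 1 ≤ D.re := by
  have hψ : HasDerivAt (fun t : ℝ => (g t).re - t) (D.re - 1) 1 :=
    (HasDerivAt.real_of_complex (z := 1) (by simpa using hg)).sub (hasDerivAt_id 1)
  have hmax : IsLocalMaxOn (fun t : ℝ => (g t).re - t) (Icc 0 1) 1 := by
    refine IsMaxOn.localize fun t ht => ?_
    simp only [mem_ofPred_eq, ofReal_one, h1, one_re, sub_self]
    linarith [re_le_norm (g t), hle t ht]
  have := hmax.hasFDerivWithinAt_nonpos hψ.hasFDerivAt.hasFDerivWithinAt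
    (y := -1) (mem_posTangentConeAt_of_segment_subset (by norm_num [segment_symm, segment_eq_Icc]))
  simpa using this

lemma im_eq_zero_of_hasDerivAt_of_norm_le {g : ℂ → ℂ} {D : ℂ} (hg : HasDerivAt g D 1)
    (h1 : g 1 = 1) (hle : ∀ z, ‖z‖ = 1 → ‖g z‖ ≤ 1) : D.im = 0 := by
  have hcircle : HasDerivAt (fun s : ℝ => exp (s * I)) I 0 := by
    simpa using ((hasDerivAt_id (0 : ℂ)).mul_const I).cexp.comp_ofReal (z := 0)
  have hχ : HasDerivAt (fun s : ℝ => ‖g (exp (s * I))‖ ^ 2)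
      (2 * inner ℝ (1 : ℂ) (D * I)) 0 := by
    simpa [h1] using (hg.comp_of_eq (0 : ℝ) hcircle (by simp)).norm_sq
  have hmax : IsLocalMax (fun s : ℝ => ‖g (exp (s * I))‖ ^ 2) 0 := by
    refine IsMaxOn.isLocalMax (fun s _ => ?_) Filter.univ_mem
    simp only [mem_ofPred_eq, ofReal_zero, zero_mul, exp_zero, h1, norm_one, one_pow]
    exact pow_le_one₀ (norm_nonneg _) (hle _ (norm_exp_ofReal_mul_I s))
  simpa using hmax.hasDerivAt_eq_zero hχ

lemma exists_norm_eq_of_isMaxOn {q : ℂ → ℂ} {R a : ℝ} (hq : ContinuousOn q (ball 0 R))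
    (h0 : ‖q 0‖ < a) {z₁ : ℂ} (hz₁ : z₁ ∈ ball 0 R) (h1 : a ≤ ‖q z₁‖) :
    ∃ z₀ ∈ ball 0 R, ‖q z₀‖ = a ∧ IsMaxOn (‖q ·‖) (closedBall 0 ‖z₀‖) z₀ := by
  have hK : closedBall (0 : ℂ) ‖z₁‖ ⊆ ball 0 R := closedBall_subset_ball (mem_ball_zero_iff.1 hz₁)
  have hqK : ContinuousOn (‖q ·‖) (closedBall 0 ‖z₁‖) := (hq.mono hK).norm
  set S := closedBall (0 : ℂ) ‖z₁‖ ∩ {z | a ≤ ‖q z‖}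
  have hS : IsCompact S := (isCompact_closedBall 0 ‖z₁‖).of_isClosed_subset
    (hqK.preimage_isClosed_of_isClosed isClosed_closedBall isClosed_Ici) inter_subset_left
  obtain ⟨z₀, ⟨hz₀K, hz₀a⟩, hmin⟩ :=
    hS.exists_isMinOn ⟨z₁, by simp, h1⟩ continuous_norm.continuousOn
  have hz₀ : z₀ ≠ 0 := by
    rintro rfl
    exact h0.not_ge hz₀a
  have hball : ∀ z ∈ ball (0 : ℂ) ‖z₀‖, ‖q z‖ ≤ a := by
    intro z hz
    by_contra! h
    have := hmin ⟨?_, h.le⟩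
    · exact (mem_ball_zero_iff.1 hz).not_ge this
    · exact mem_closedBall_zero_iff.2 ((mem_ball_zero_iff.1 hz).le.trans
        (mem_closedBall_zero_iff.1 hz₀K))
  have hclosedBall : ∀ z ∈ closedBall (0 : ℂ) ‖z₀‖, ‖q z‖ ≤ a := by
    have hT : IsClosed (closedBall (0 : ℂ) ‖z₁‖ ∩ {z | ‖q z‖ ≤ a}) :=
      hqK.preimage_isClosed_of_isClosed isClosed_closedBall isClosed_Iic
    rw [← closure_ball 0 (norm_ne_zero_iff.2 hz₀)]
    refine fun z hz => (hT.closure_subset_iff.2 (fun w hw => ⟨?_, hball w hw⟩) hz).2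
    exact mem_closedBall_zero_iff.2 ((mem_ball_zero_iff.1 hw).le.trans
      (mem_closedBall_zero_iff.1 hz₀K))
  have hqz₀ : ‖q z₀‖ = a := le_antisymm (hclosedBall z₀ (by simp)) hz₀a
  exact ⟨z₀, hK hz₀K, hqz₀, fun z hz => (hclosedBall z hz).trans_eq hqz₀.symm⟩

/- Jack's lemma. `g λ = q (λ z₀) / q z₀` maps the closed unit disk into itself and fixes `1`;
by Schwarz `|g t| ≤ t` on `[0, 1]`, so the derivative of `g` at `1` is real (maximality along
the circle) and at least `1` (along the radius). -/
lemma exists_mul_deriv_eq_of_isMaxOn {q : ℂ → ℂ} {R : ℝ} {z₀ : ℂ}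
    (hq : DifferentiableOn ℂ q (ball 0 R)) (h0 : q 0 = 0) (hz₀ : z₀ ∈ ball 0 R) (hq₀ : q z₀ ≠ 0)
    (hmax : IsMaxOn (‖q ·‖) (closedBall 0 ‖z₀‖) z₀) :
    ∃ m : ℝ, 1 ≤ m ∧ z₀ * deriv q z₀ = m * q z₀ := by
  set g : ℂ → ℂ := fun z => q (z * z₀) / q z₀
  set D := deriv q z₀ * z₀ / q z₀
  have hmem : ∀ z : ℂ, ‖z‖ ≤ 1 → z * z₀ ∈ closedBall 0 ‖z₀‖ := fun z hz => by
    simpa using mul_le_of_le_one_left (norm_nonneg z₀) hz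
  have hqd : ∀ z : ℂ, ‖z‖ ≤ 1 → DifferentiableAt ℂ q (z * z₀) := fun z hz =>
    hq.differentiableAt (isOpen_ball.mem_nhds
      (closedBall_subset_ball (mem_ball_zero_iff.1 hz₀) (hmem z hz)))
  have hg_le : ∀ z : ℂ, ‖z‖ ≤ 1 → ‖g z‖ ≤ 1 := fun z hz => by
    simpa [g, norm_div, div_le_one (norm_pos_iff.2 hq₀)] using hmax (hmem z hz)
  have hg : DifferentiableOn ℂ g (ball 0 1) := fun z hz =>
    (((hqd z (mem_ball_zero_iff.1 hz).le).comp z (differentiableAt_id.mul_const z₀)).div_const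
      (q z₀)).differentiableWithinAt
  have hg' : HasDerivAt g D 1 :=
    (((hqd 1 (by simp)).hasDerivAt.comp_of_eq 1 ((hasDerivAt_id 1).mul_const z₀)
      (by simp)).div_const (q z₀)).congr_deriv (by simp [D])
  have hg1 : g 1 = 1 := by simp [g, hq₀]
  have hschwarz : ∀ z ∈ ball (0 : ℂ) 1, ‖g z‖ ≤ ‖z‖ := fun z hz =>
    norm_le_norm_of_mapsTo_ball hg
      (fun w hw => mem_closedBall_zero_iff.2 (hg_le w (mem_ball_zero_iff.1 hw).le))
      (by simp [g, h0]) (mem_ball_zero_iff.1 hz)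
  have hradial : ∀ t ∈ Icc (0 : ℝ) 1, ‖g t‖ ≤ t := by
    intro t ht
    rcases ht.2.lt_or_eq with ht1 | rfl
    · simpa [abs_of_nonneg ht.1] using hschwarz t (by simpa [abs_of_nonneg ht.1] using ht1)
    · simpa using hg_le 1 (by simp)
  have hre := one_le_re_of_hasDerivAt_of_norm_le hg' hg1 hradial
  have him := im_eq_zero_of_hasDerivAt_of_norm_le hg' hg1 (fun z hz => hg_le z hz.le)
  refine ⟨D.re, hre, ?_⟩
  rw [(ext rfl (by simp [him]) : (D.re : ℂ) = D), div_mul_cancel₀ _ hq₀, mul_comm]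

theorem stmt_8 (β : ℝ) (hβ : Real.exp 1 + (Real.exp 1)⁻¹ ≤ β)
    (p : ℂ → ℂ) (hp : DifferentiableOn ℂ p unitDisk) (hp0 : p 0 = 1)
    (hpne : ∀ z ∈ unitDisk, p z ≠ 0)
    (hsub : Subord (fun z => p z + (β : ℂ) * z * deriv p z / p z) Complex.exp) :
    Subord p Complex.exp := by
  obtain ⟨w, -, -, hw_lt, hw⟩ := hsub
  obtain ⟨q, hq0, hq', hpq⟩ := exists_eq_mul_exp_of_ne_zero_on_ball hp hpne
  simp only [hp0, one_mul] at hpq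
  have hq : DifferentiableOn ℂ q unitDisk := fun z hz =>
    (hq' z hz).differentiableAt.differentiableWithinAt
  refine ⟨q, hq, hq0, fun z hz => ?_, hpq⟩
  by_contra! hz₁
  obtain ⟨z₀, hz₀, hqz₀, hmax⟩ :=
    exists_norm_eq_of_isMaxOn hq.continuousOn (by simp [hq0]) hz hz₁
  obtain ⟨m, hm, hjack⟩ :=
    exists_mul_deriv_eq_of_isMaxOn hq hq0 hz₀ (norm_ne_zero_iff.1 (by simp [hqz₀])) hmax
  have hβ0 : 0 ≤ β := (by positivity : (0 : ℝ) ≤ Real.exp 1 + (Real.exp 1)⁻¹).trans hβ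
  have hβm : Real.exp 1 + (Real.exp 1)⁻¹ ≤ β * m := hβ.trans (le_mul_of_one_le_right hβ0 hm)
  have heq : exp (q z₀) + ((β * m : ℝ) : ℂ) * q z₀ = exp (w z₀) := calc
    _ = p z₀ + β * (z₀ * deriv q z₀) := by rw [hjack, hpq z₀ hz₀]; push_cast; ring
    _ = exp (w z₀) := by rw [← hw z₀ hz₀, (hq' z₀ hz₀).deriv]; ring
  have hnorm := exp_one_le_norm_exp_add_mul hβm hqz₀
  rw [heq, norm_exp] at hnorm
  exact hnorm.not_gt (Real.exp_lt_exp.2 ((re_le_norm _).trans_lt (hw_lt z₀ hz₀)))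
end
end

section
/- Let β be a real number with β ≥ e³ − e, and let p ∈ H₁. If the function z ↦ p(z) + β·(z·p′(z))² is subordinate to z ↦ e^z on 𝔻, then p is subordinate to z ↦ e^z on 𝔻. -/
/-!
If `p` ever left the disk `‖p z - 1‖ < 1/2`, take a point `z₀` of least modulus where
`‖p z₀ - 1‖ = 1/2`. The Schwarz lemma applied to `p - 1` on the disk of radius `‖z₀‖`
(Jack's lemma) gives `‖z₀ p'(z₀)‖ ≥ 1/2`, hence
`‖p z₀ + β (z₀ p'(z₀))² - 1‖ ≥ β/4 - 1/2 ≥ 2`, while `‖exp w - 1‖ ≤ 2‖w‖ < 2` for `‖w‖ < 1`.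
So `p` stays in that disk, and `log ∘ p` is the required Schwarz function.
-/

open Complex

noncomputable section

open Metric Set Filter Topology

theorem le_norm_of_hasDerivWithinAt_of_norm_le_mul {F : Type*} [NormedAddCommGroup F]
    [NormedSpace ℝ F] {g : ℝ → F} {g' : F} {c : ℝ} (hg : HasDerivWithinAt g g' (Iio 1) 1)
    (hbound : ∀ t ∈ Ioo (0 : ℝ) 1, ‖g t‖ ≤ c * t) (hc : c ≤ ‖g 1‖) : c ≤ ‖g'‖ := by
  have hslope : Tendsto (fun t => ‖slope g 1 t‖) (𝓝[<] 1) (𝓝 ‖g'‖) := by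
    have := (hasDerivWithinAt_iff_tendsto_slope.1 hg).norm
    rwa [sdiff_singleton_eq_self self_notMem_Iio] at this
  refine ge_of_tendsto hslope ?_
  filter_upwards [Ioo_mem_nhdsLT one_pos] with t ht
  have hpos : 0 < 1 - t := sub_pos.2 ht.2
  have hdiff : c * (1 - t) ≤ ‖g 1 - g t‖ := by
    linarith [norm_sub_norm_le (g 1) (g t), hbound t ht]
  rw [slope_def_module, norm_smul, norm_inv, Real.norm_eq_abs, abs_sub_comm,
    abs_of_pos hpos, norm_sub_rev, le_inv_mul_iff₀ hpos, mul_comm]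
  exact hdiff

/-- Jack's lemma, via the Schwarz lemma along the ray through `z₀`. -/
theorem le_norm_mul_deriv_of_mapsTo_ball {f : ℂ → ℂ} {z₀ : ℂ} {c : ℝ}
    (hf : DifferentiableOn ℂ f (ball 0 ‖z₀‖)) (hfz₀ : DifferentiableAt ℂ f z₀)
    (hmaps : MapsTo f (ball 0 ‖z₀‖) (ball (f 0) c)) (hc : c ≤ dist (f z₀) (f 0)) :
    c ≤ ‖z₀ * deriv f z₀‖ := by
  rcases eq_or_ne z₀ 0 with rfl | hz₀
  · simpa using hc
  set g : ℝ → ℂ := fun t => f (t * z₀) - f 0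
  have hg : HasDerivAt g (deriv f z₀ * z₀) 1 := by
    have hray : HasDerivAt (fun t : ℂ => t * z₀) z₀ 1 := by
      simpa using (hasDerivAt_id (1 : ℂ)).mul_const z₀
    have hfz₀' : HasDerivAt f (deriv f z₀) ((1 : ℂ) * z₀) := by
      rw [one_mul]; exact hfz₀.hasDerivAt
    exact ((hfz₀'.comp (1 : ℂ) hray).sub_const (f 0)).comp_ofReal
  rw [mul_comm]
  refine le_norm_of_hasDerivWithinAt_of_norm_le_mul hg.hasDerivWithinAt (fun t ht => ?_)
    (by simpa [g, ← dist_eq_norm] using hc)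
  have hnorm : ‖(t : ℂ) * z₀‖ = t * ‖z₀‖ := by
    rw [norm_mul, norm_real, Real.norm_of_nonneg ht.1.le]
  have hmem : (t : ℂ) * z₀ ∈ ball (0 : ℂ) ‖z₀‖ := by
    rw [mem_ball_zero_iff, hnorm]
    exact mul_lt_of_lt_one_left (norm_pos_iff.2 hz₀) ht.2
  have := dist_le_div_mul_dist_of_mapsTo_ball hf (hmaps.mono_right ball_subset_closedBall) hmem
  rw [dist_eq_norm, dist_zero_right, hnorm] at this
  calc ‖g t‖ ≤ c / ‖z₀‖ * (t * ‖z₀‖) := this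
    _ = c * t := by field_simp

theorem exists_min_norm_le_dist {E X : Type*} [NormedAddCommGroup E] [ProperSpace E]
    [PseudoMetricSpace X] {f : E → X} {a : X} {r c : ℝ} {z₁ : E}
    (hf : ContinuousOn f (closedBall 0 r)) (hz₁ : z₁ ∈ closedBall 0 r)
    (hc : c ≤ dist (f z₁) a) :
    ∃ z₀ ∈ closedBall (0 : E) r, c ≤ dist (f z₀) a ∧ MapsTo f (ball 0 ‖z₀‖) (ball a c) := by
  set K := closedBall (0 : E) r ∩ f ⁻¹' {x | c ≤ dist x a}
  have hK : IsCompact K :=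
    (isCompact_closedBall 0 r).of_isClosed_subset
      (hf.preimage_isClosed_of_isClosed isClosed_closedBall
        (isClosed_le continuous_const (continuous_id.dist continuous_const)))
      inter_subset_left
  obtain ⟨z₀, ⟨hz₀r, hz₀c⟩, hmin⟩ := hK.exists_isMinOn ⟨z₁, hz₁, hc⟩ continuous_norm.continuousOn
  refine ⟨z₀, hz₀r, hz₀c, fun z hz => ?_⟩
  rw [mem_ball_zero_iff] at hz
  by_contra hfz
  rw [mem_ball, not_lt] at hfz
  have hzr : z ∈ closedBall (0 : E) r :=
    mem_closedBall_zero_iff.2 (hz.le.trans (mem_closedBall_zero_iff.1 hz₀r))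
  exact hz.not_ge (hmin ⟨hzr, hfz⟩)

theorem dist_le_of_mapsTo_ball {E X : Type*} [NormedAddCommGroup E] [NormedSpace ℝ E]
    [PseudoMetricSpace X] {f : E → X} {a : X} {c : ℝ} {z₀ : E}
    (hf : ContinuousAt f z₀) (hz₀ : z₀ ≠ 0) (hmaps : MapsTo f (ball 0 ‖z₀‖) (ball a c)) :
    dist (f z₀) a ≤ c := by
  have hz₀mem : z₀ ∈ closure (ball (0 : E) ‖z₀‖) := by
    rw [closure_ball 0 (norm_ne_zero_iff.2 hz₀)]
    exact mem_closedBall_zero_iff.2 le_rfl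
  have := hf.continuousWithinAt.mem_closure hz₀mem (hmaps.mono_right ball_subset_closedBall)
  rwa [isClosed_closedBall.closure_eq, mem_closedBall] at this

theorem norm_sub_one_lt_half_of_subord_exp {β : ℝ} (hβ : 10 ≤ β) {p : ℂ → ℂ}
    (hp : DifferentiableOn ℂ p unitDisk) (hp0 : p 0 = 1)
    (hsub : Subord (fun z => p z + (β : ℂ) * (z * deriv p z) ^ 2) exp) :
    ∀ z ∈ unitDisk, ‖p z - 1‖ < 1 / 2 := by
  obtain ⟨w, -, -, hw_lt, hw_eq⟩ := hsub
  by_contra! h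
  obtain ⟨z₁, hz₁, hz₁c⟩ := h
  have hball : closedBall (0 : ℂ) ‖z₁‖ ⊆ unitDisk :=
    closedBall_subset_ball (mem_ball_zero_iff.1 hz₁)
  obtain ⟨z₀, hz₀r, hz₀c, hmaps⟩ := exists_min_norm_le_dist (a := 1) (c := 1 / 2)
    (hp.continuousOn.mono hball) (mem_closedBall_zero_iff.2 le_rfl) (by rwa [dist_eq_norm])
  have hz₀ : z₀ ∈ unitDisk := hball hz₀r
  have hz₀ne : z₀ ≠ 0 := by
    rintro rfl
    norm_num [hp0] at hz₀c
  have hpz₀ : DifferentiableAt ℂ p z₀ := hp.differentiableAt (isOpen_ball.mem_nhds hz₀)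
  have hpz₀_le : ‖p z₀ - 1‖ ≤ 1 / 2 := by
    rw [← dist_eq_norm]
    exact dist_le_of_mapsTo_ball hpz₀.continuousAt hz₀ne hmaps
  have hjack : 1 / 2 ≤ ‖z₀ * deriv p z₀‖ := by
    rw [← hp0] at hmaps hz₀c
    exact le_norm_mul_deriv_of_mapsTo_ball
      (hp.mono (ball_subset_ball (mem_ball_zero_iff.1 hz₀).le)) hpz₀ hmaps hz₀c
  have hexp_ge : 2 ≤ ‖exp (w z₀) - 1‖ := by
    have hsq : ‖(β : ℂ) * (z₀ * deriv p z₀) ^ 2‖ = β * ‖z₀ * deriv p z₀‖ ^ 2 := by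
      rw [norm_mul, norm_pow, norm_real, Real.norm_of_nonneg (by linarith)]
    have heq : exp (w z₀) - 1 = (β : ℂ) * (z₀ * deriv p z₀) ^ 2 - (1 - p z₀) := by
      rw [← hw_eq z₀ hz₀]; ring
    have := norm_sub_norm_le ((β : ℂ) * (z₀ * deriv p z₀) ^ 2) (1 - p z₀)
    rw [heq]
    rw [norm_sub_rev 1] at this
    nlinarith
  have hexp_lt : ‖exp (w z₀) - 1‖ < 2 := by
    have hwz₀ := hw_lt z₀ hz₀
    linarith [norm_exp_sub_one_le hwz₀.le]
  linarith

theorem subord_exp_of_norm_sub_one_lt_half {p : ℂ → ℂ} (hp : DifferentiableOn ℂ p unitDisk)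
    (hp0 : p 0 = 1) (h : ∀ z ∈ unitDisk, ‖p z - 1‖ < 1 / 2) : Subord p exp := by
  have hslit : ∀ z ∈ unitDisk, p z ∈ slitPlane := fun z hz => by
    simpa using mem_slitPlane_of_norm_lt_one ((h z hz).trans one_half_lt_one)
  refine ⟨fun z => log (p z), fun z hz => ?_, by simp [hp0], fun z hz => ?_,
    fun z hz => (exp_log (slitPlane_ne_zero (hslit z hz))).symm⟩
  · exact ((differentiableAt_log (hslit z hz)).comp z
      (hp.differentiableAt (isOpen_ball.mem_nhds hz))).differentiableWithinAt
  · calc ‖log (p z)‖ = ‖log (1 + (p z - 1))‖ := by rw [add_sub_cancel]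
      _ ≤ 3 / 2 * ‖p z - 1‖ := norm_log_one_add_half_le_self (h z hz).le
      _ < 1 := by linarith [h z hz]

theorem stmt_10 (β : ℝ) (hβ : Real.exp 1 ^ 3 - Real.exp 1 ≤ β)
    (p : ℂ → ℂ) (hp : DifferentiableOn ℂ p unitDisk) (hp0 : p 0 = 1)
    (hsub : Subord (fun z => p z + (β : ℂ) * (z * deriv p z) ^ 2) Complex.exp) :
    Subord p Complex.exp := by
  have hβ10 : 10 ≤ β := by
    have he : 2.7 < Real.exp 1 := lt_trans (by norm_num) Real.exp_one_gt_d9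
    nlinarith [mul_pos (sub_pos.2 he) (sub_pos.2 he)]
  exact subord_exp_of_norm_sub_one_lt_half hp hp0
    (norm_sub_one_lt_half_of_subord_exp hβ10 hp hp0 hsub)
end
end

section
/- Let β be a real number with β ≥ e² − 1, and let p ∈ H₁ with p(z) ≠ 0 for all z ∈ 𝔻. If the function z ↦ p(z) + β·(z·p′(z))²/p(z) is subordinate to z ↦ e^z on 𝔻, then p is subordinate to z ↦ e^z on 𝔻. -/
open Complex

noncomputable section

open Metric Set intervalIntegral

lemma poly_core (s c : ℝ) (hs : 0 ≤ s) (hc : 6 ≤ c) :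
    (c+1)^2 ≤ ((c-1)^2 + 4*c*(s-1)^2) * (2*s^2 + 2*s + 1) := by
  have key : ((c-1)^2 + 4*c*(s-1)^2) * (2*s^2 + 2*s + 1) - (c+1)^2
      = s*(2*((c-1)^2 - 25/6*c)*(s+1) + c/3*(24*s*(s-1/2)^2 + 7*s + 25)) := by ring
  have hA : (0:ℝ) ≤ (c-1)^2 - 25/6*c := by nlinarith
  have hG : (0:ℝ) ≤ 24*s*(s-1/2)^2 + 7*s + 25 := by positivity
  nlinarith [mul_nonneg hA (by linarith : (0:ℝ) ≤ s+1), mul_nonneg (by linarith : (0:ℝ) ≤ c/3) hG,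
    mul_nonneg hs (add_nonneg (mul_nonneg (mul_nonneg (by norm_num : (0:ℝ) ≤ (2:ℝ)) hA) (by linarith : (0:ℝ) ≤ s+1)) (mul_nonneg (by linarith : (0:ℝ) ≤ c/3) hG))]

-- main real inequality
lemma key_real (u c : ℝ) (hu1 : -1 ≤ u) (hu2 : u ≤ 1) (hc : Real.exp 1 ^ 2 - 1 ≤ c) :
    Real.exp 1 ^ 2 ≤ Real.exp (2*u) * ((c-1)^2 + 4*c*u^2) := by
  have he : (2.7182818283 : ℝ) ≤ Real.exp 1 := Real.exp_one_gt_d9.le.trans' (by norm_num)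
  have hc6 : (6:ℝ) ≤ c := by nlinarith
  set s := u + 1 with hs
  have hs0 : 0 ≤ s := by linarith
  have hq : 1 + 2*s + (2*s)^2/2 ≤ Real.exp (2*s) := Real.quadratic_le_exp_of_nonneg (by linarith)
  have h1 : (2*s^2+2*s+1) ≤ Real.exp (2*s) := by nlinarith
  have h2 : (c+1)^2 ≤ ((c-1)^2 + 4*c*(s-1)^2) * (2*s^2+2*s+1) := poly_core s c hs0 hc6
  have h3 : Real.exp (2*u) * Real.exp 2 = Real.exp (2*s) := by
    rw [← Real.exp_add, hs]; ring_nf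
  have he2 : Real.exp 1 ^ 2 = Real.exp 2 := by rw [← Real.exp_nat_mul]; norm_num
  have hpos : (0:ℝ) ≤ (c-1)^2 + 4*c*u^2 := by positivity
  have h4 : (c+1)^2 ≤ ((c-1)^2 + 4*c*u^2) * Real.exp (2*s) := by
    calc (c+1)^2 ≤ ((c-1)^2 + 4*c*(s-1)^2) * (2*s^2+2*s+1) := h2
    _ ≤ ((c-1)^2 + 4*c*(s-1)^2) * Real.exp (2*s) := by
        apply mul_le_mul_of_nonneg_left h1; positivity
    _ = ((c-1)^2 + 4*c*u^2) * Real.exp (2*s) := by rw [hs]; ring_nf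
  have h5 : Real.exp 2 ^ 2 ≤ (c+1)^2 := by
    have : Real.exp 2 ≤ c + 1 := by rw [← he2]; linarith
    have h0 : (0:ℝ) ≤ Real.exp 2 := (Real.exp_pos 2).le
    nlinarith
  -- exp 1 ^2 * exp 2 = exp 2 ^ 2... target * exp 2:
  have hE2 : (0:ℝ) < Real.exp 2 := Real.exp_pos 2
  rw [he2, ← mul_le_mul_iff_left₀ hE2]
  calc Real.exp 2 * Real.exp 2 = Real.exp 2 ^2 := by ring
  _ ≤ (c+1)^2 := h5
  _ ≤ ((c-1)^2 + 4*c*u^2) * Real.exp (2*s) := h4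
  _ = Real.exp (2*u) * ((c-1)^2+4*c*u^2) * Real.exp 2 := by rw [← h3]; ring

lemma key_complex (a : ℂ) (ha : ‖a‖ = 1) (c : ℝ) (hc : Real.exp 1 ^ 2 - 1 ≤ c) :
    Real.exp 1 ≤ ‖Complex.exp a * (1 + (c:ℂ) * a^2)‖ := by
  have hns : a.re^2 + a.im^2 = 1 := by
    have := Complex.sq_norm a
    rw [Complex.sq_norm] at this
    have h1 : Complex.normSq a = 1 := by
      have : ‖a‖ = 1 := ha
      rw [← Complex.sq_norm, this]; norm_num
    rw [Complex.normSq_apply] at h1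
    nlinarith [h1]
  have hu1 : -1 ≤ a.re := by nlinarith
  have hu2 : a.re ≤ 1 := by nlinarith
  have habs2 : ‖(1:ℂ) + (c:ℂ) * a^2‖^2 = (c-1)^2 + 4*c*a.re^2 := by
    rw [Complex.sq_norm, Complex.normSq_apply]
    have hre : ((1:ℂ) + (c:ℂ)*a^2).re = 1 + c*(a.re^2 - a.im^2) := by
      simp only [Complex.add_re, Complex.mul_re, pow_two, Complex.mul_im,
        Complex.ofReal_re, Complex.ofReal_im, Complex.one_re]; ring
    have him : ((1:ℂ) + (c:ℂ)*a^2).im = c*(2*a.re*a.im) := by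
      simp only [Complex.add_im, Complex.mul_im, pow_two, Complex.mul_re,
        Complex.ofReal_re, Complex.ofReal_im, Complex.one_im]; ring
    rw [hre, him]
    linear_combination (c^2*(a.re^2+a.im^2+1) - 2*c) * hns
  have hexp : ‖Complex.exp a‖ = Real.exp a.re := Complex.norm_exp a
  have hX : ‖Complex.exp a * (1 + (c:ℂ)*a^2)‖ = Real.exp a.re * ‖(1:ℂ) + (c:ℂ)*a^2‖ := by
    rw [norm_mul, hexp]
  have hk := key_real a.re c hu1 hu2 hc
  have hexp2 : Real.exp (2*a.re) = Real.exp a.re ^ 2 := by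
    rw [two_mul, Real.exp_add]; ring
  rw [hX]
  have hXnn : 0 ≤ Real.exp a.re * ‖(1:ℂ) + (c:ℂ)*a^2‖ := by positivity
  nlinarith [hk, habs2, hexp2, Real.exp_pos 1, Real.exp_pos a.re, norm_nonneg ((1:ℂ) + (c:ℂ)*a^2)]

lemma exists_primitive_ball {f : ℂ → ℂ} (hf : DifferentiableOn ℂ f (ball (0:ℂ) 1)) :
    ∃ F : ℂ → ℂ, F 0 = 0 ∧ ∀ z ∈ ball (0:ℂ) 1, HasDerivAt F (f z) z := by
  have hAn : AnalyticOnNhd ℂ f (ball (0:ℂ) 1) := hf.analyticOnNhd isOpen_ball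
  have hf' : AnalyticOnNhd ℂ (deriv f) (ball (0:ℂ) 1) := hAn.deriv
  have hfc : ContinuousOn f (ball (0:ℂ) 1) := hf.continuousOn
  have hf'c : ContinuousOn (deriv f) (ball (0:ℂ) 1) := hf'.continuousOn
  set F : ℂ → ℂ := fun z => ∫ t in (0:ℝ)..1, z * f ((t:ℂ) * z) with hF
  have hmem : ∀ {x : ℂ} {t : ℝ}, x ∈ ball (0:ℂ) 1 → t ∈ Set.uIcc (0:ℝ) 1 → (t:ℂ) * x ∈ ball (0:ℂ) 1 := by
    intro x t hx ht
    rw [Set.uIcc_of_le (by norm_num : (0:ℝ) ≤ 1)] at ht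
    simp only [mem_ball, dist_zero_right] at hx ⊢
    calc ‖(t:ℂ) * x‖ = |t| * ‖x‖ := by rw [norm_mul, Complex.norm_real, Real.norm_eq_abs]
    _ ≤ 1 * ‖x‖ := by
        apply mul_le_mul_of_nonneg_right _ (norm_nonneg x)
        rw [abs_le]; exact ⟨by linarith [ht.1], ht.2⟩
    _ < 1 := by rwa [one_mul]
  refine ⟨F, ?_, ?_⟩
  · simp [hF]
  intro z₀ hz₀
  simp only [mem_ball, dist_zero_right] at hz₀
  set r : ℝ := (‖z₀‖ + 1) / 2 with hr
  have hr1 : r < 1 := by rw [hr]; linarith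
  have hrz : ‖z₀‖ < r := by rw [hr]; linarith [norm_nonneg z₀]
  have hr0 : 0 < r := lt_of_le_of_lt (norm_nonneg z₀) hrz
  have hsub : closedBall (0:ℂ) r ⊆ ball (0:ℂ) 1 := closedBall_subset_ball hr1
  -- bounds on the compact closed ball
  obtain ⟨C1, hC1⟩ := (isCompact_closedBall (0:ℂ) r).exists_bound_of_continuousOn
    (hfc.mono hsub)
  obtain ⟨C2, hC2⟩ := (isCompact_closedBall (0:ℂ) r).exists_bound_of_continuousOn
    (hf'c.mono hsub)
  have hC1' : 0 ≤ C1 := le_trans (norm_nonneg _) (hC1 0 (mem_closedBall_self hr0.le))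
  have hC2' : 0 ≤ C2 := le_trans (norm_nonneg _) (hC2 0 (mem_closedBall_self hr0.le))
  set ε : ℝ := r - ‖z₀‖ with hε
  have hε0 : 0 < ε := by rw [hε]; linarith
  have hball : ball z₀ ε ⊆ ball (0:ℂ) r := by
    intro x hx
    simp only [mem_ball, dist_zero_right] at hx ⊢
    have h := dist_triangle x z₀ 0
    simp only [dist_zero_right] at h
    have : dist x z₀ < ε := hx
    calc ‖x‖ ≤ dist x z₀ + ‖z₀‖ := by simpa [dist_zero_right] using h
    _ < ε + ‖z₀‖ := by linarith
    _ = r := by rw [hε]; ring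
  have hmemr : ∀ {x : ℂ} {t : ℝ}, x ∈ ball z₀ ε → t ∈ Set.uIoc (0:ℝ) 1 → (t:ℂ) * x ∈ closedBall (0:ℂ) r := by
    intro x t hx ht
    have hx' := hball hx
    rw [Set.uIoc_of_le (by norm_num : (0:ℝ) ≤ 1)] at ht
    simp only [mem_ball, dist_zero_right] at hx'
    simp only [mem_closedBall, dist_zero_right]
    calc ‖(t:ℂ) * x‖ = |t| * ‖x‖ := by rw [norm_mul, Complex.norm_real, Real.norm_eq_abs]
    _ ≤ 1 * ‖x‖ := mul_le_mul_of_nonneg_right (by rw [abs_le]; exact ⟨by linarith [ht.1.le], ht.2⟩) (norm_nonneg x)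
    _ ≤ r := by rw [one_mul]; exact hx'.le
  -- the parametric derivative
  set F' : ℂ → ℝ → ℂ := fun x t => f ((t:ℂ)*x) + (t:ℂ)*x * deriv f ((t:ℂ)*x) with hF'def
  have hderiv : ∀ t : ℝ, ∀ x ∈ ball (0:ℂ) 1, (t:ℂ)*x ∈ ball (0:ℂ) 1 →
      HasDerivAt (fun y => y * f ((t:ℂ)*y)) (F' x t) x := by
    intro t x hx htx
    have h1 : HasDerivAt f (deriv f ((t:ℂ)*x)) ((t:ℂ)*x) :=
      ((hf.differentiableAt (isOpen_ball.mem_nhds htx)).hasDerivAt)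
    have h2 : HasDerivAt (fun y : ℂ => (t:ℂ)*y) (t:ℂ) x := by
      simpa using (hasDerivAt_id x).const_mul (t:ℂ)
    have h3 : HasDerivAt (fun y => f ((t:ℂ)*y)) (deriv f ((t:ℂ)*x) * (t:ℂ)) x := h1.comp x h2
    have h4 : HasDerivAt (fun y => y * f ((t:ℂ)*y))
        (1 * f ((t:ℂ)*x) + x * (deriv f ((t:ℂ)*x) * (t:ℂ))) x :=
      (hasDerivAt_id x).mul h3
    convert h4 using 1
    rw [hF'def]; ring
  -- apply dominated differentiation
  have main := intervalIntegral.hasDerivAt_integral_of_dominated_loc_of_deriv_le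
    (F := fun x t => x * f ((t:ℂ)*x)) (F' := F') (x₀ := z₀) (s := ball z₀ ε)
    (bound := fun _ => C1 + r * C2) (μ := MeasureTheory.volume) (a := 0) (b := 1) (ball_mem_nhds z₀ hε0)
    ?_ ?_ ?_ ?_ ?_ ?_
  · obtain ⟨hint, hder⟩ := main
    -- FTC to compute the integral
    have hg : ∀ t ∈ Set.uIcc (0:ℝ) 1, HasDerivAt (fun s : ℝ => (s:ℂ) * f ((s:ℂ)*z₀)) (F' z₀ t) t := by
      intro t ht
      have htz : (t:ℂ)*z₀ ∈ ball (0:ℂ) 1 := hmem (mem_ball_zero_iff.2 hz₀) ht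
      have h1 : HasDerivAt f (deriv f ((t:ℂ)*z₀)) ((t:ℂ)*z₀) :=
        (hf.differentiableAt (isOpen_ball.mem_nhds htz)).hasDerivAt
      have h2 : HasDerivAt (fun w : ℂ => w * z₀) z₀ (t:ℂ) := by
        simpa using (hasDerivAt_id (t:ℂ)).mul_const z₀
      have h3 : HasDerivAt (fun w : ℂ => f (w * z₀)) (deriv f ((t:ℂ)*z₀) * z₀) (t:ℂ) := h1.comp (t:ℂ) h2
      have h4 : HasDerivAt (fun w : ℂ => w * f (w * z₀))
          (1 * f ((t:ℂ)*z₀) + (t:ℂ) * (deriv f ((t:ℂ)*z₀) * z₀)) (t:ℂ) :=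
        (hasDerivAt_id (t:ℂ)).mul h3
      have h5 := h4.comp_ofReal
      convert h5 using 1
      rw [hF'def]; ring
    have hFTC : ∫ t in (0:ℝ)..1, F' z₀ t = f z₀ := by
      rw [intervalIntegral.integral_eq_sub_of_hasDerivAt hg hint]
      simp
    rw [hFTC] at hder
    exact hder
  · -- measurability in neighborhood
    filter_upwards [isOpen_ball.mem_nhds (mem_ball_self hε0)] with x hx
    apply ContinuousOn.aestronglyMeasurable _ measurableSet_uIoc
    have hc : ContinuousOn (fun s : ℝ => (s:ℂ)*x) (Set.uIoc (0:ℝ) 1) :=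
      (Complex.continuous_ofReal.mul continuous_const).continuousOn
    exact continuousOn_const.mul
      (((hfc.mono hsub).comp hc (fun s hs => hmemr hx hs)))
  · -- integrability at z₀
    apply ContinuousOn.intervalIntegrable
    have hc : ContinuousOn (fun s : ℝ => (s:ℂ)*z₀) (Set.uIcc (0:ℝ) 1) :=
      (Complex.continuous_ofReal.mul continuous_const).continuousOn
    exact continuousOn_const.mul
      (hfc.comp hc (fun s hs => hmem (mem_ball_zero_iff.2 hz₀) hs))
  · -- measurability of F' z₀
    apply ContinuousOn.aestronglyMeasurable _ measurableSet_uIoc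
    have hc : ContinuousOn (fun s : ℝ => (s:ℂ)*z₀) (Set.uIoc (0:ℝ) 1) :=
      (Complex.continuous_ofReal.mul continuous_const).continuousOn
    have hmaps : ∀ s ∈ Set.uIoc (0:ℝ) 1, (s:ℂ)*z₀ ∈ closedBall (0:ℂ) r :=
      fun s hs => hmemr (mem_ball_self hε0) hs
    have hball1 : ∀ s ∈ Set.uIoc (0:ℝ) 1, (s:ℂ)*z₀ ∈ ball (0:ℂ) 1 :=
      fun s hs => hsub (hmaps s hs)
    exact (hfc.comp hc hball1).add (hc.mul (hf'c.comp hc hball1))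
  · -- bound
    apply MeasureTheory.ae_of_all
    intro t ht x hx
    have htx := hmemr hx ht
    have htx1 : (t:ℂ)*x ∈ ball (0:ℂ) 1 := hsub htx
    rw [hF'def]
    calc ‖f ((t:ℂ)*x) + (t:ℂ)*x * deriv f ((t:ℂ)*x)‖
        ≤ ‖f ((t:ℂ)*x)‖ + ‖(t:ℂ)*x‖ * ‖deriv f ((t:ℂ)*x)‖ := by
          refine (norm_add_le _ _).trans ?_
          rw [norm_mul]
    _ ≤ C1 + r * C2 := by
        have h1 := hC1 _ htx
        have h2 := hC2 _ htx
        have h3 : ‖(t:ℂ)*x‖ ≤ r := by simpa [mem_closedBall, dist_zero_right] using htx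
        have := mul_le_mul h3 h2 (norm_nonneg _) hr0.le
        linarith
  · -- integrable bound
    exact _root_.intervalIntegrable_const
  · -- differentiability
    apply MeasureTheory.ae_of_all
    intro t ht x hx
    exact hderiv t x (hball.trans (ball_subset_ball hr1.le) hx) (hsub (hmemr hx ht))

lemma exists_log_ball {p : ℂ → ℂ} (hp : DifferentiableOn ℂ p (ball (0:ℂ) 1))
    (hp0 : p 0 = 1) (hpne : ∀ z ∈ ball (0:ℂ) 1, p z ≠ 0) :
    ∃ L : ℂ → ℂ, L 0 = 0 ∧ (∀ z ∈ ball (0:ℂ) 1, HasDerivAt L (deriv p z / p z) z) ∧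
      ∀ z ∈ ball (0:ℂ) 1, Complex.exp (L z) = p z := by
  have hpd : DifferentiableOn ℂ (deriv p) (ball (0:ℂ) 1) :=
    ((hp.analyticOnNhd isOpen_ball).deriv).differentiableOn
  have hg : DifferentiableOn ℂ (fun z => deriv p z / p z) (ball (0:ℂ) 1) :=
    hpd.div hp hpne
  obtain ⟨L, hL0, hLd⟩ := exists_primitive_ball hg
  refine ⟨L, hL0, hLd, ?_⟩
  -- show p * exp(-L) is constant 1
  set h : ℂ → ℂ := fun z => p z * Complex.exp (-L z) with hh
  have hder : ∀ z ∈ ball (0:ℂ) 1, HasDerivAt h 0 z := by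
    intro z hz
    have h1 : HasDerivAt p (deriv p z) z :=
      (hp.differentiableAt (isOpen_ball.mem_nhds hz)).hasDerivAt
    have h2 : HasDerivAt L (deriv p z / p z) z := hLd z hz
    have h3 : HasDerivAt (fun w => Complex.exp (-L w))
        (Complex.exp (-L z) * (-(deriv p z / p z))) z := by
      have := (Complex.hasDerivAt_exp (-L z)).comp z h2.neg
      simpa [Function.comp_def] using this
    have h4 := h1.mul h3
    refine h4.congr_deriv ?_
    have e : p z * (deriv p z / p z) = deriv p z := by
      rw [← mul_div_assoc]; exact mul_div_cancel_left₀ _ (hpne z hz)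
    linear_combination (-(Complex.exp (-L z))) * e
  have hconst : ∀ z ∈ ball (0:ℂ) 1, h z = h 0 := by
    intro z hz
    apply Convex.is_const_of_fderivWithin_eq_zero (convex_ball (0:ℂ) 1)
      (fun w hw => ((hder w hw).differentiableAt.differentiableWithinAt))
      (fun w hw => ?_) hz (mem_ball_self one_pos)
    rw [fderivWithin_of_isOpen isOpen_ball hw]
    have := (hder w hw).hasFDerivAt.fderiv
    rw [this]
    ext v
    simp
  intro z hz
  have := hconst z hz
  rw [hh] at this
  simp only [hp0, hL0, neg_zero, Complex.exp_zero, mul_one] at this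
  have hne := Complex.exp_ne_zero (-L z)
  have : p z * Complex.exp (-L z) = 1 := this
  rw [Complex.exp_neg] at this
  field_simp at this
  rw [this]

theorem stmt_11 (β : ℝ) (hβ : Real.exp 1 ^ 2 - 1 ≤ β)
    (p : ℂ → ℂ) (hp : DifferentiableOn ℂ p unitDisk) (hp0 : p 0 = 1)
    (hpne : ∀ z ∈ unitDisk, p z ≠ 0)
    (hsub : Subord (fun z => p z + (β : ℂ) * (z * deriv p z) ^ 2 / p z)
      Complex.exp) :
    Subord p Complex.exp := by
  have hUD : unitDisk = ball (0:ℂ) 1 := rfl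
  rw [hUD] at hp hpne
  obtain ⟨L, hL0, hLd, hLexp⟩ := exists_log_ball hp hp0 hpne
  by_cases hgood : ∀ z ∈ ball (0:ℂ) 1, ‖L z‖ < 1
  · exact ⟨L, fun z hz => ((hLd z hz).differentiableAt).differentiableWithinAt, hL0, hgood,
      fun z hz => (hLexp z hz).symm⟩
  push_neg at hgood
  obtain ⟨z₁, hz₁, hz₁L⟩ := hgood
  exfalso
  have hLc : ∀ z ∈ ball (0:ℂ) 1, ContinuousAt L z := fun z hz => (hLd z hz).continuousAt
  have hz₁n : ‖z₁‖ < 1 := mem_ball_zero_iff.1 hz₁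
  -- IVT claim
  have claim : ∀ z, ‖z‖ < 1 → 1 ≤ ‖L z‖ → ∃ y, ‖y‖ ≤ ‖z‖ ∧ ‖L y‖ = 1 := by
    intro z hz hLz
    have hmem : ∀ t : ℝ, t ∈ Set.Icc (0:ℝ) 1 → (t:ℂ)*z ∈ ball (0:ℂ) 1 := by
      intro t ht
      rw [mem_ball_zero_iff, norm_mul, Complex.norm_real, Real.norm_eq_abs,
        _root_.abs_of_nonneg ht.1]
      calc t * ‖z‖ ≤ 1 * ‖z‖ := mul_le_mul_of_nonneg_right ht.2 (norm_nonneg z)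
      _ < 1 := by rwa [one_mul]
    have hcont : ContinuousOn (fun t : ℝ => ‖L ((t:ℂ) * z)‖) (Set.Icc 0 1) := by
      intro t ht
      apply ContinuousAt.continuousWithinAt
      have h1 : ContinuousAt (fun s : ℝ => (s:ℂ)*z) t :=
        (Complex.continuous_ofReal.mul continuous_const).continuousAt
      have h2 : ContinuousAt (fun s : ℝ => L ((s:ℂ)*z)) t :=
        show ContinuousAt (L ∘ fun s : ℝ => (s:ℂ)*z) t from
          ContinuousAt.comp (hLc ((t:ℂ)*z) (hmem t ht)) h1
      exact continuous_norm.continuousAt.comp h2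
    have hiv := intermediate_value_Icc (by norm_num : (0:ℝ) ≤ 1) hcont
    have h0 : ‖L (((0:ℝ):ℂ) * z)‖ = 0 := by
      simp [hL0]
    have h1' : (1:ℝ) ∈ Set.Icc ‖L (((0:ℝ):ℂ)*z)‖ ‖L (((1:ℝ):ℂ)*z)‖ := by
      rw [h0]
      constructor
      · norm_num
      · simpa using hLz
    obtain ⟨t, ht, htv⟩ := hiv h1'
    refine ⟨(t:ℂ)*z, ?_, htv⟩
    rw [norm_mul, Complex.norm_real, Real.norm_eq_abs, _root_.abs_of_nonneg ht.1]
    calc t*‖z‖ ≤ 1*‖z‖ := mul_le_mul_of_nonneg_right ht.2 (norm_nonneg z)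
    _ = ‖z‖ := one_mul _
  -- the set S and its minimum
  set S : Set ℂ := {z | ‖z‖ ≤ ‖z₁‖ ∧ ‖L z‖ = 1} with hS
  have hSsub : S ⊆ closedBall (0:ℂ) ‖z₁‖ := fun z hz => by
    simpa [mem_closedBall, dist_zero_right] using hz.1
  have hSne : S.Nonempty := by
    obtain ⟨y, hy1, hy2⟩ := claim z₁ hz₁n hz₁L
    exact ⟨y, hy1, hy2⟩
  have hcbsub : closedBall (0:ℂ) ‖z₁‖ ⊆ ball (0:ℂ) 1 := closedBall_subset_ball hz₁n
  have hSclosed : IsClosed S := by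
    have hLcon : ContinuousOn L (closedBall (0:ℂ) ‖z₁‖) := by
      intro z hz
      exact (hLc z (hcbsub hz)).continuousWithinAt
    have h2 := hLcon.preimage_isClosed_of_isClosed isClosed_closedBall
      (isClosed_eq continuous_norm continuous_const : IsClosed {w : ℂ | ‖w‖ = 1})
    have h3 : S = closedBall (0:ℂ) ‖z₁‖ ∩ L ⁻¹' {w : ℂ | ‖w‖ = 1} := by
      ext z
      simp only [hS, Set.mem_setOf_eq, Set.mem_inter_iff, Set.mem_preimage,
        mem_closedBall, dist_zero_right]
    rw [h3]
    exact h2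
  have hScompact : IsCompact S :=
    (isCompact_closedBall _ _).of_isClosed_subset hSclosed hSsub
  obtain ⟨z₀, hz₀S, hz₀min⟩ := hScompact.exists_isMinOn hSne continuous_norm.continuousOn
  have hz₀L : ‖L z₀‖ = 1 := hz₀S.2
  have hr₀lt : ‖z₀‖ < 1 := lt_of_le_of_lt hz₀S.1 hz₁n
  have hz₀b : z₀ ∈ ball (0:ℂ) 1 := mem_ball_zero_iff.2 hr₀lt
  set r₀ : ℝ := ‖z₀‖ with hr₀
  have hr₀pos : 0 < r₀ := by
    rcases eq_or_lt_of_le (norm_nonneg z₀) with h | h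
    · exfalso
      have : z₀ = 0 := by rwa [eq_comm, norm_eq_zero] at h
      rw [this, hL0] at hz₀L
      simp at hz₀L
    · exact h
  -- small norms give |L| < 1
  have hsmall : ∀ z, ‖z‖ < r₀ → ‖L z‖ < 1 := by
    intro z hz
    by_contra hge
    push_neg at hge
    obtain ⟨y, hy1, hy2⟩ := claim z (lt_trans hz hr₀lt) hge
    have hyS : y ∈ S := ⟨le_trans hy1 (le_trans hz.le hz₀S.1), hy2⟩
    have := hz₀min hyS
    simp only [hr₀] at this
    have : r₀ ≤ ‖y‖ := this
    linarith [lt_of_le_of_lt hy1 hz]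
  -- ψ and Schwarz
  set ψ : ℂ → ℂ := fun ξ => L (ξ * z₀) with hψ
  have hψd : ∀ ξ : ℂ, ‖ξ * z₀‖ < 1 →
      HasDerivAt ψ (deriv p (ξ*z₀) / p (ξ*z₀) * z₀) ξ := by
    intro ξ hξ
    have h1 := hLd (ξ*z₀) (mem_ball_zero_iff.2 hξ)
    have h2 : HasDerivAt (fun η : ℂ => η * z₀) z₀ ξ := by
      simpa using (hasDerivAt_id ξ).mul_const z₀
    exact h1.comp ξ h2
  have hψmem : ∀ ξ : ℂ, ‖ξ‖ < 1 → ‖ξ * z₀‖ < r₀ := by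
    intro ξ hξ
    rw [norm_mul]
    calc ‖ξ‖ * ‖z₀‖ < 1 * r₀ :=
      mul_lt_mul_of_pos_right hξ hr₀pos
    _ = r₀ := one_mul _
  have hψdiff : DifferentiableOn ℂ ψ (ball (0:ℂ) 1) := by
    intro ξ hξ
    have hξ' := mem_ball_zero_iff.1 hξ
    exact (hψd ξ (lt_trans (hψmem ξ hξ') hr₀lt)).differentiableAt.differentiableWithinAt
  have hψmaps : MapsTo ψ (ball (0:ℂ) 1) (ball (0:ℂ) 1) := by
    intro ξ hξ
    rw [mem_ball_zero_iff] at hξ ⊢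
    exact hsmall _ (hψmem ξ hξ)
  have hψ0 : ψ 0 = 0 := by simp [hψ, hL0]
  have hSchwarz : ∀ ξ : ℂ, ‖ξ‖ < 1 → ‖ψ ξ‖ ≤ ‖ξ‖ := by
    intro ξ hξ
    have := Complex.dist_le_dist_of_mapsTo_ball_self hψdiff
      (by rw [hψ0]; exact hψmaps.mono_right ball_subset_closedBall) (mem_ball_zero_iff.2 hξ)
    simpa [dist_zero_right, hψ0] using this
  -- closed-ball bound for L
  have hLle : ∀ w : ℂ, ‖w‖ ≤ r₀ → ‖L w‖ ≤ 1 := by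
    intro w hw
    rcases lt_or_eq_of_le hw with h | h
    · exact (hsmall w h).le
    · have hwb : w ∈ ball (0:ℂ) 1 := mem_ball_zero_iff.2 (h ▸ hr₀lt)
      have h1 : Filter.Tendsto (fun t : ℝ => (t:ℂ)*w) (nhdsWithin 1 (Set.Iio 1)) (nhds w) := by
        have h0 : Filter.Tendsto (fun t : ℝ => (t:ℂ)*w) (nhds 1) (nhds (((1:ℝ):ℂ)*w)) :=
          Filter.Tendsto.mul (Complex.continuous_ofReal.tendsto 1) tendsto_const_nhds
        rw [Complex.ofReal_one, one_mul] at h0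
        exact h0.mono_left nhdsWithin_le_nhds
      have h2 : Filter.Tendsto (fun t : ℝ => ‖L ((t:ℂ)*w)‖) (nhdsWithin 1 (Set.Iio 1))
          (nhds ‖L w‖) :=
        (continuous_norm.tendsto _).comp ((hLc w hwb).tendsto.comp h1)
      apply le_of_tendsto h2
      filter_upwards [Ioo_mem_nhdsLT (by norm_num : (0:ℝ) < 1)] with t ht
      have : ‖(t:ℂ)*w‖ < r₀ := by
        rw [norm_mul, Complex.norm_real, Real.norm_eq_abs, _root_.abs_of_nonneg ht.1.le, ← h]
        calc t * ‖w‖ < 1 * ‖w‖ := by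
              apply mul_lt_mul_of_pos_right ht.2
              rw [h]; exact hr₀pos
          _ = ‖w‖ := one_mul _
      exact (hsmall _ this).le
  -- boundary data
  set a : ℂ := L z₀ with ha
  have haa : ‖a‖ = 1 := hz₀L
  set D : ℂ := deriv p z₀ / p z₀ * z₀ with hDdef
  have hψ1 : HasDerivAt ψ D 1 := by
    have h1 : ‖(1:ℂ) * z₀‖ < 1 := by rwa [one_mul]
    have := hψd 1 h1
    rwa [one_mul] at this
  have hψ1v : ψ 1 = a := by show L ((1:ℂ)*z₀) = a; rw [one_mul]
  -- radial derivative bound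
  have hm1 : 1 ≤ ((starRingEnd ℂ) a * D).re := by
    have hslope : Filter.Tendsto (slope ψ 1) (nhdsWithin 1 {(1:ℂ)}ᶜ) (nhds D) :=
      hasDerivAt_iff_tendsto_slope.1 hψ1
    have hmapR : Filter.Tendsto (fun t : ℝ => (t:ℂ)) (nhdsWithin 1 (Set.Iio 1))
        (nhdsWithin 1 {(1:ℂ)}ᶜ) := by
      apply tendsto_nhdsWithin_of_tendsto_nhds_of_eventually_within
      · exact (Complex.continuous_ofReal.tendsto 1).mono_left nhdsWithin_le_nhds
      · filter_upwards [self_mem_nhdsWithin] with t ht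
        simp only [Set.mem_compl_iff, Set.mem_singleton_iff]
        intro hc
        have : t = 1 := by exact_mod_cast hc
        exact absurd this (ne_of_lt ht)
    have hcont : Continuous (fun w : ℂ => ((starRingEnd ℂ) a * w).re) :=
      Complex.continuous_re.comp (continuous_const.mul continuous_id)
    have hT : Filter.Tendsto (fun t : ℝ => ((starRingEnd ℂ) a * slope ψ 1 (t:ℂ)).re)
        (nhdsWithin 1 (Set.Iio 1)) (nhds (((starRingEnd ℂ) a * D).re)) :=
      (hcont.tendsto D).comp (hslope.comp hmapR)
    apply ge_of_tendsto hT
    filter_upwards [Ioo_mem_nhdsLT (by norm_num : (0:ℝ) < 1)] with t ht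
    have htne : ((t:ℂ) - 1) = ((t - 1 : ℝ) : ℂ) := by push_cast; ring
    have hslope_eq : slope ψ 1 (t:ℂ) = (ψ (t:ℂ) - a) / ((t - 1 : ℝ) : ℂ) := by
      rw [slope_def_field, hψ1v, ← htne]
    rw [hslope_eq, ← mul_div_assoc, Complex.div_ofReal_re]
    have hnum : ((starRingEnd ℂ) a * (ψ (t:ℂ) - a)).re ≤ t - 1 := by
      have hre : ((starRingEnd ℂ) a * (ψ (t:ℂ) - a)).re
          = ((starRingEnd ℂ) a * ψ (t:ℂ)).re - ((starRingEnd ℂ) a * a).re := by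
        rw [mul_sub, Complex.sub_re]
      have hconj : ((starRingEnd ℂ) a * a).re = 1 := by
        rw [mul_comm, Complex.mul_conj]
        simp [Complex.normSq_eq_norm_sq, haa]
      have hub : ((starRingEnd ℂ) a * ψ (t:ℂ)).re ≤ t := by
        calc ((starRingEnd ℂ) a * ψ (t:ℂ)).re ≤ ‖(starRingEnd ℂ) a * ψ (t:ℂ)‖ :=
          Complex.re_le_norm _
        _ = ‖ψ (t:ℂ)‖ := by
            rw [norm_mul]
            simp [haa, Complex.norm_conj]
        _ ≤ ‖(t:ℂ)‖ := hSchwarz _ (by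
            rw [Complex.norm_real, Real.norm_eq_abs, _root_.abs_of_nonneg ht.1.le]
            exact ht.2)
        _ = t := by rw [Complex.norm_real, Real.norm_eq_abs, _root_.abs_of_nonneg ht.1.le]
      rw [hre, hconj]
      linarith
    rw [le_div_iff_of_neg (by linarith [ht.2] : t - 1 < 0)]
    linarith
  -- tangential derivative zero
  have hIm : ((starRingEnd ℂ) a * D).im = 0 := by
    set g : ℝ → ℝ := fun θ => ((starRingEnd ℂ) a * ψ (Complex.exp ((θ:ℂ) * Complex.I))).re with hg
    have hg0 : g 0 = 1 := by
      rw [hg]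
      simp only [Complex.ofReal_zero, zero_mul, Complex.exp_zero, hψ1v]
      rw [mul_comm, Complex.mul_conj]
      simp [Complex.normSq_eq_norm_sq, haa]
    have hgle : ∀ θ : ℝ, g θ ≤ 1 := by
      intro θ
      have habs1 : ‖Complex.exp ((θ:ℂ) * Complex.I)‖ = 1 := by
        rw [Complex.norm_exp]
        simp [Complex.mul_I_re]
      have hψb : ‖ψ (Complex.exp ((θ:ℂ) * Complex.I))‖ ≤ 1 := by
        rw [hψ]
        apply hLle
        rw [norm_mul, habs1, one_mul]
      calc g θ ≤ ‖(starRingEnd ℂ) a * ψ (Complex.exp ((θ:ℂ)*Complex.I))‖ :=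
        Complex.re_le_norm _
      _ = ‖ψ (Complex.exp ((θ:ℂ)*Complex.I))‖ := by
          rw [norm_mul]
          simp [haa, Complex.norm_conj]
      _ ≤ 1 := hψb
    have hloc : IsLocalMax g 0 :=
      Filter.Eventually.of_forall (fun θ => (hgle θ).trans_eq hg0.symm)
    have hder : HasDerivAt g (((starRingEnd ℂ) a * (D * Complex.I)).re) 0 := by
      have c1 : HasDerivAt (fun w : ℂ => Complex.exp (w * Complex.I)) Complex.I 0 := by
        have h0 : HasDerivAt (fun w : ℂ => w * Complex.I) Complex.I 0 := by
          simpa using (hasDerivAt_id (0:ℂ)).mul_const Complex.I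
        have := (Complex.hasDerivAt_exp ((0:ℂ) * Complex.I)).comp 0 h0
        simpa [Function.comp_def] using this
      have hψ1' : HasDerivAt ψ D (Complex.exp ((0:ℂ) * Complex.I)) := by
        simpa using hψ1
      have c2 : HasDerivAt (fun w : ℂ => ψ (Complex.exp (w * Complex.I))) (D * Complex.I) 0 :=
        by have c2' := hψ1'.comp 0 c1; exact c2'
      have c3 : HasDerivAt (fun θ : ℝ => ψ (Complex.exp ((θ:ℂ) * Complex.I))) (D * Complex.I) 0 := by
        have := c2.comp_ofReal (z := 0)
        simpa using this
      have c4 : HasDerivAt (fun θ : ℝ => (starRingEnd ℂ) a * ψ (Complex.exp ((θ:ℂ) * Complex.I)))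
          ((starRingEnd ℂ) a * (D * Complex.I)) 0 := c3.const_mul _
      have c5 := Complex.reCLM.hasFDerivAt.comp_hasDerivAt 0 c4
      exact c5
    have := hloc.hasDerivAt_eq_zero hder
    have h2 : ((starRingEnd ℂ) a * D * Complex.I).re = 0 := by
      rw [mul_assoc]; exact this
    rw [Complex.mul_I_re] at h2
    linarith
  -- D = m * a
  set m : ℝ := ((starRingEnd ℂ) a * D).re with hm
  have had : (starRingEnd ℂ) a * D = (m : ℂ) := by
    apply Complex.ext
    · simp [hm]
    · simp [hIm]
  have hnormSq : a * (starRingEnd ℂ) a = 1 := by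
    rw [Complex.mul_conj]
    simp [Complex.normSq_eq_norm_sq, haa]
  have hD : D = (m : ℂ) * a := by
    calc D = (a * (starRingEnd ℂ) a) * D := by rw [hnormSq, one_mul]
    _ = a * ((starRingEnd ℂ) a * D) := by ring
    _ = a * (m : ℂ) := by rw [had]
    _ = (m : ℂ) * a := by ring
  -- final contradiction
  obtain ⟨w₀, hw₀d, hw₀0, hw₀lt, hw₀eq⟩ := hsub
  have hz₀U : z₀ ∈ unitDisk := hz₀b
  have hq := hw₀eq z₀ hz₀U
  simp only at hq
  have hpz₀ : p z₀ = Complex.exp a := (hLexp z₀ hz₀b).symm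
  have hpne₀ : p z₀ ≠ 0 := hpne z₀ hz₀b
  have hzd : z₀ * deriv p z₀ = (m:ℂ) * a * p z₀ := by
    have h1 : deriv p z₀ / p z₀ * z₀ = (m:ℂ) * a := by rw [← hDdef, hD]
    rw [div_mul_eq_mul_div, div_eq_iff hpne₀] at h1
    rw [mul_comm z₀ (deriv p z₀)]
    exact h1
  set c : ℝ := β * m^2 with hc
  have hm1' : (1:ℝ) ≤ m := hm1
  have hβ0 : (0:ℝ) < β := by
    have h1 : (1:ℝ) < Real.exp 1 := by
      have := Real.exp_one_gt_d9; linarith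
    nlinarith
  have hcge : Real.exp 1 ^ 2 - 1 ≤ c := by
    have : β ≤ c := by nlinarith [mul_nonneg hβ0.le (mul_nonneg (by linarith : (0:ℝ) ≤ m - 1) (by linarith : (0:ℝ) ≤ m + 1))]
    linarith
  have hqval : p z₀ + (β:ℂ) * (z₀ * deriv p z₀)^2 / p z₀
      = Complex.exp a * (1 + (c:ℂ) * a^2) := by
    rw [hzd, hpz₀, hc]
    push_cast
    field_simp [Complex.exp_ne_zero]
  have hkey := key_complex a haa c hcge
  rw [← hqval, hq] at hkey
  have hlt : ‖Complex.exp (w₀ z₀)‖ < Real.exp 1 := by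
    rw [Complex.norm_exp]
    apply Real.exp_lt_exp.2
    calc (w₀ z₀).re ≤ ‖w₀ z₀‖ := Complex.re_le_norm _
    _ < 1 := hw₀lt z₀ hz₀U
  linarith
end
end
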